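/- arXiv:1004.3827 — 7 statements merged into one kernel-verified Lean document; each statement's English description precedes it below -/
import Mathlib

section
/- Let r ≥ 1 and let G₁ be a group. Let G be the free product of the constant family of groups Gᵢ = G₁ indexed by ℤ/rℤ, with canonical inclusions ιᵢ : G₁ → G, and let f be an automorphism of G such that f(ιᵢ(G₁)) = ι_{i+1}(G₁) for all i ∈ ℤ/rℤ, so that f^r maps ι₀(G₁) onto itself and induces an automorphism φ of G₁ with f^r(ι₀(g)) = ι₀(φ(g)) for all g ∈ G₁. Then the quotient of G by the normal closure of the set {g⁻¹·f(g) : g ∈ G} is isomorphic to the quotient of G₁ by the normal closure of the set {g⁻¹·φ(g) : g ∈ G₁}. -/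
/-!
The quotient of `G` by the normal closure of `{g⁻¹ * f g}` is the group of `f`-coinvariants:
homomorphisms out of it are the `f`-invariant homomorphisms out of `G`. Since `f ^ k` carries
`ι₀(G₁)` onto `ι_k(G₁)`, every generator `ιᵢ h` of `G` can be written as `f ^ i.val (ι₀ x)`, and
sending it to the class of `x` defines an `f`-invariant homomorphism `G → G₁ ⧸ ⟪g⁻¹ * φ g⟫`:
invariance only has to be checked when `f` wraps around from `ι_{r-1}` to `ι₀`, where it is
exactly the `φ`-invariance of the target. Restricting along `ι₀` gives the inverse map.
-/

open Monoid Function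

noncomputable def MonoidHom.factorOfInjective {H K L : Type*} [Group H] [Group K] [Group L]
    {a : H →* K} (ha : Injective a) (b : L →* K) (hb : b.range ≤ a.range) : L →* H :=
  (MonoidHom.ofInjective ha).symm.toMonoidHom.comp
    (b.codRestrict a.range fun x => hb (b.mem_range.2 ⟨x, rfl⟩))

theorem MonoidHom.apply_factorOfInjective {H K L : Type*} [Group H] [Group K] [Group L]
    {a : H →* K} (ha : Injective a) (b : L →* K) (hb : b.range ≤ a.range) (x : L) :
    a (factorOfInjective ha b hb x) = b x := by
  rw [factorOfInjective, MonoidHom.comp_apply, MulEquiv.coe_toMonoidHom,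
    ← MonoidHom.ofInjective_apply ha, MulEquiv.apply_symm_apply, MonoidHom.codRestrict_apply]

section Coinvariants

variable {K : Type*} [Group K]

def MulAut.coinvariantsKer (f : MulAut K) : Subgroup K :=
  Subgroup.normalClosure {x | ∃ g, x = g⁻¹ * f g}

instance (f : MulAut K) : f.coinvariantsKer.Normal :=
  Subgroup.normalClosure_normal

namespace MulAut

theorem mk_apply_coinvariantsKer (f : MulAut K) (x : K) :
    (QuotientGroup.mk (f x) : K ⧸ f.coinvariantsKer) = QuotientGroup.mk x :=
  (QuotientGroup.eq.2 <|
    Subgroup.subset_normalClosure (s := {y | ∃ g, y = g⁻¹ * f g}) ⟨x, rfl⟩).symm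

theorem mk_pow_apply_coinvariantsKer (f : MulAut K) (k : ℕ) (x : K) :
    (QuotientGroup.mk ((f ^ k) x) : K ⧸ f.coinvariantsKer) = QuotientGroup.mk x := by
  induction k with
  | zero => rfl
  | succ k ih => rw [pow_succ', MulAut.mul_apply, mk_apply_coinvariantsKer, ih]

theorem coinvariantsKer_le_ker {Q : Type*} [Group Q] (f : MulAut K) {ρ : K →* Q}
    (hρ : ∀ x, ρ (f x) = ρ x) : f.coinvariantsKer ≤ ρ.ker := by
  refine Subgroup.normalClosure_le_normal ?_
  rintro _ ⟨g, rfl⟩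
  rw [SetLike.mem_coe, MonoidHom.mem_ker, map_mul, map_inv, hρ, inv_mul_cancel]

end MulAut

end Coinvariants

section CyclicShift

variable {r : ℕ} {G₁ : Type*} [Group G₁]

local notation "ι" j => CoprodI.of (M := fun _ : ZMod r => G₁) (i := j)

def ShiftsFactors (f : MulAut (CoprodI fun _ : ZMod r => G₁)) : Prop :=
  ∀ i : ZMod r, Subgroup.map f.toMonoidHom (ι i).range = (ι (i + 1)).range

namespace ShiftsFactors

variable {f : MulAut (CoprodI fun _ : ZMod r => G₁)}

theorem map_pow_range_of_zero (hf : ShiftsFactors f) (k : ℕ) :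
    Subgroup.map (f ^ k).toMonoidHom (ι 0).range = (ι (k : ZMod r)).range := by
  induction k with
  | zero => rw [pow_zero, Nat.cast_zero]; exact Subgroup.map_id _
  | succ k ih =>
    have hcomp : (f ^ (k + 1)).toMonoidHom = f.toMonoidHom.comp (f ^ k).toMonoidHom :=
      MonoidHom.ext fun x => by simp [pow_succ']
    rw [hcomp, ← Subgroup.map_map, ih, hf, Nat.cast_succ]

variable [NeZero r]

noncomputable def toFactorZero (hf : ShiftsFactors f) (i : ZMod r) : G₁ →* G₁ :=
  MonoidHom.factorOfInjective (a := (f ^ i.val).toMonoidHom.comp (ι 0))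
    ((f ^ i.val).injective.comp (CoprodI.of_injective 0)) (ι i)
    (by rw [MonoidHom.range_comp, hf.map_pow_range_of_zero, ZMod.natCast_zmod_val])

theorem pow_val_apply_of_toFactorZero (hf : ShiftsFactors f) (i : ZMod r) (h : G₁) :
    (f ^ i.val) ((ι 0) (hf.toFactorZero i h)) = (ι i) h :=
  MonoidHom.apply_factorOfInjective (a := (f ^ i.val).toMonoidHom.comp (ι 0)) _ _ _ h

theorem toFactorZero_zero_apply (hf : ShiftsFactors f) (h : G₁) : hf.toFactorZero 0 h = h :=
  CoprodI.of_injective (0 : ZMod r) (by simpa using hf.pow_val_apply_of_toFactorZero 0 h)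

noncomputable def toCoinvariants (hf : ShiftsFactors f) (φ : MulAut G₁) :
    (CoprodI fun _ : ZMod r => G₁) →* G₁ ⧸ φ.coinvariantsKer :=
  CoprodI.lift fun i => (QuotientGroup.mk' _).comp (hf.toFactorZero i)

theorem toCoinvariants_of (hf : ShiftsFactors f) (φ : MulAut G₁) (i : ZMod r) (h : G₁) :
    hf.toCoinvariants φ ((ι i) h) = hf.toFactorZero i h :=
  CoprodI.lift_of _ _

theorem toCoinvariants_pow_apply_of_zero (hf : ShiftsFactors f) {φ : MulAut G₁}
    (hφ : ∀ g, (f ^ r) ((ι 0) g) = (ι 0) (φ g)) {k : ℕ} (hk : k ≤ r) (x : G₁) :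
    hf.toCoinvariants φ ((f ^ k) ((ι 0) x)) = x := by
  rcases hk.lt_or_eq with hk | rfl
  · obtain ⟨y, hy⟩ : (f ^ k) ((ι 0) x) ∈ (ι (k : ZMod r)).range :=
      hf.map_pow_range_of_zero k ▸ ⟨_, ⟨x, rfl⟩, rfl⟩
    have hyx : hf.toFactorZero k y = x := by
      have hpull := hf.pow_val_apply_of_toFactorZero k y
      rw [ZMod.val_cast_of_lt hk, hy] at hpull
      exact CoprodI.of_injective (0 : ZMod r) ((f ^ k).injective hpull)
    rw [← hy, toCoinvariants_of, hyx]
  · rw [hφ, toCoinvariants_of, toFactorZero_zero_apply]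
    exact MulAut.mk_apply_coinvariantsKer φ x

theorem toCoinvariants_apply (hf : ShiftsFactors f) {φ : MulAut G₁}
    (hφ : ∀ g, (f ^ r) ((ι 0) g) = (ι 0) (φ g)) (x : CoprodI fun _ : ZMod r => G₁) :
    hf.toCoinvariants φ (f x) = hf.toCoinvariants φ x := by
  suffices (hf.toCoinvariants φ).comp f.toMonoidHom = hf.toCoinvariants φ from
    DFunLike.congr_fun this x
  refine CoprodI.ext_hom _ _ fun i => MonoidHom.ext fun h => ?_
  have hfi : f ((ι i) h) = (f ^ (i.val + 1)) ((ι 0) (hf.toFactorZero i h)) := by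
    rw [pow_succ', MulAut.mul_apply, pow_val_apply_of_toFactorZero]
  simp only [MonoidHom.comp_apply, MulEquiv.coe_toMonoidHom, hfi,
    hf.toCoinvariants_pow_apply_of_zero hφ (ZMod.val_lt i), toCoinvariants_of]

end ShiftsFactors

end CyclicShift

/-- With `G` the free product of the constant family `(G₁)_{i ∈ ℤ/rℤ}` and
`f : G ≃ G` an automorphism carrying the `i`-th canonical copy of `G₁` onto the `(i+1)`-st,
inducing `φ : G₁ ≃ G₁` via `f^r (ι₀ g) = ι₀ (φ g)`, the quotient of `G` by the normal closure
of `{g⁻¹ * f g}` is isomorphic to the quotient of `G₁` by the normal closure of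
`{g⁻¹ * φ g}`. -/
theorem stmt_0 (r : ℕ) (hr : 1 ≤ r) (G₁ : Type*) [Group G₁]
    (f : MulAut (Monoid.CoprodI (fun _ : ZMod r => G₁)))
    (hf : ∀ i : ZMod r,
      Subgroup.map f.toMonoidHom
        (MonoidHom.range (Monoid.CoprodI.of (M := fun _ : ZMod r => G₁) (i := i))) =
      MonoidHom.range (Monoid.CoprodI.of (M := fun _ : ZMod r => G₁) (i := i + 1)))
    (φ : MulAut G₁)
    (hφ : ∀ g : G₁,
      (f ^ r) (Monoid.CoprodI.of (M := fun _ : ZMod r => G₁) (i := (0 : ZMod r)) g) =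
        Monoid.CoprodI.of (M := fun _ : ZMod r => G₁) (i := (0 : ZMod r)) (φ g)) :
    Nonempty (
      (Monoid.CoprodI (fun _ : ZMod r => G₁) ⧸
        Subgroup.normalClosure {x | ∃ g, x = g⁻¹ * f g}) ≃*
      (G₁ ⧸ Subgroup.normalClosure {x | ∃ g, x = g⁻¹ * φ g})) := by
  have : NeZero r := ⟨by omega⟩
  have hshift : ShiftsFactors f := hf
  let ρ := QuotientGroup.lift _ (hshift.toCoinvariants φ)
    (f.coinvariantsKer_le_ker (hshift.toCoinvariants_apply hφ))
  let π := QuotientGroup.lift _ ((QuotientGroup.mk' f.coinvariantsKer).comp (CoprodI.of (i := 0)))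
    (φ.coinvariantsKer_le_ker fun g => by
      simp only [MonoidHom.comp_apply, QuotientGroup.mk'_apply, ← hφ,
        MulAut.mk_pow_apply_coinvariantsKer])
  refine ⟨MonoidHom.toMulEquiv ρ π ?_ ?_⟩
  · refine QuotientGroup.monoidHom_ext _ (CoprodI.ext_hom _ _ fun i => MonoidHom.ext fun h => ?_)
    show π (hshift.toCoinvariants φ (CoprodI.of h)) = QuotientGroup.mk (CoprodI.of h)
    rw [← hshift.pow_val_apply_of_toFactorZero i h,
      hshift.toCoinvariants_pow_apply_of_zero hφ i.val_lt.le, MulAut.mk_pow_apply_coinvariantsKer]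
    rfl
  · refine QuotientGroup.monoidHom_ext _ (MonoidHom.ext fun g => ?_)
    show hshift.toCoinvariants φ (CoprodI.of g) = g
    rw [hshift.toCoinvariants_of, hshift.toFactorZero_zero_apply]
end

section
/- Let r ≥ 1 and let G₁ be a group. Let G be the free product of the constant family of groups Gᵢ = G₁ indexed by ℤ/rℤ, with canonical inclusions ιᵢ : G₁ → G, and let f be an automorphism of G such that f(ιᵢ(G₁)) = ι_{i+1}(G₁) for all i ∈ ℤ/rℤ, so that f^r maps ι₀(G₁) onto itself and induces an automorphism φ of G₁ with f^r(ι₀(g)) = ι₀(φ(g)) for all g ∈ G₁. Then f is meridianal if and only if φ is a meridianal automorphism of G₁. -/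
/-!
Write `N_f` for the normal closure of the displacements `x⁻¹ * f x`; it contains every
`x⁻¹ * f^n x`. Since `ιₙ(G₁) = fⁿ(ι₀(G₁))`, we get `N_f = G` as soon as `ι₀(G₁) ≤ N_f`, and this
holds when `φ` is meridianal because `ι₀(g⁻¹ * φ g) = x⁻¹ * f^r x` for `x = ι₀ g`.
Conversely, a `φ`-invariant homomorphism `q` out of `G₁` extends to an `f`-invariant
homomorphism out of `G`, by transporting `q` to `ιₙ(G₁)` along `fⁿ` for `0 ≤ n < r`; applied to
`G₁ → G₁ ⧸ N_φ`, it shows that `N_φ = G₁` whenever `N_f = G`.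
-/

open Monoid Subgroup

namespace MulAut

variable {G : Type*} [Group G]

/-- `f` is meridianal exactly when this subgroup is `⊤`. -/
def displacementClosure (f : MulAut G) : Subgroup G :=
  normalClosure {x | ∃ g, x = g⁻¹ * f g}

instance (f : MulAut G) : f.displacementClosure.Normal :=
  normalClosure_normal

theorem inv_mul_apply_mem_displacementClosure (f : MulAut G) (g : G) :
    g⁻¹ * f g ∈ f.displacementClosure :=
  subset_normalClosure ⟨g, rfl⟩

theorem inv_mul_pow_apply_mem_displacementClosure (f : MulAut G) (n : ℕ) (g : G) :
    g⁻¹ * (f ^ n) g ∈ f.displacementClosure := by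
  induction n generalizing g with
  | zero => simp
  | succ n ih =>
    have h : g⁻¹ * (f ^ (n + 1)) g = (g⁻¹ * f g) * ((f g)⁻¹ * (f ^ n) (f g)) := by
      rw [pow_succ, mul_apply]
      group
    rw [h]
    exact mul_mem (f.inv_mul_apply_mem_displacementClosure g) (ih (f g))

theorem displacementClosure_le_ker {H : Type*} [Group H] {f : MulAut G} {ψ : G →* H}
    (hψ : ∀ g, ψ (f g) = ψ g) : f.displacementClosure ≤ ψ.ker :=
  normalClosure_le_normal <| by
    rintro _ ⟨g, rfl⟩
    simp [hψ]

end MulAut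

theorem MonoidHom.exists_mulEquiv_of_range_eq {A B K : Type*} [Group A] [Group B] [Group K]
    {α : A →* K} {β : B →* K} (hα : Function.Injective α) (hβ : Function.Injective β)
    (h : α.range = β.range) : ∃ e : A ≃* B, ∀ a, α a = β (e a) :=
  ⟨(ofInjective hα).trans ((MulEquiv.subgroupCongr h).trans (ofInjective hβ).symm), fun a => by
    simp [← ofInjective_apply hβ, ofInjective_apply hα]⟩

section FreeProduct

variable {r : ℕ} {G₁ : Type*} [Group G₁] {f : MulAut (CoprodI fun _ : ZMod r => G₁)}

local notation:max "ι[" j "]" => CoprodI.of (M := fun _ : ZMod r => G₁) (i := j)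

theorem range_pow_comp_of_zero (hf : ∀ i, ι[i].range.map f.toMonoidHom = ι[i + 1].range)
    (n : ℕ) : ((f ^ n).toMonoidHom.comp ι[0]).range = ι[(n : ZMod r)].range := by
  induction n with
  | zero => rw [pow_zero, Nat.cast_zero]; rfl
  | succ n ih =>
    rw [pow_succ', Nat.cast_succ, ← hf (n : ZMod r), ← ih, MonoidHom.map_range]
    rfl

theorem exists_mulEquiv_pow_apply_of_zero
    (hf : ∀ i, ι[i].range.map f.toMonoidHom = ι[i + 1].range) (n : ℕ) :
    ∃ e : G₁ ≃* G₁, ∀ g, (f ^ n) (ι[0] g) = ι[(n : ZMod r)] (e g) :=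
  MonoidHom.exists_mulEquiv_of_range_eq ((f ^ n).injective.comp (CoprodI.of_injective 0))
    (CoprodI.of_injective _) (range_pow_comp_of_zero hf n)

theorem exists_pow_apply_of_zero_eq [NeZero r]
    (hf : ∀ i, ι[i].range.map f.toMonoidHom = ι[i + 1].range) (i : ZMod r) (h : G₁) :
    ∃ g, (f ^ i.val) (ι[0] g) = ι[i] h := by
  obtain ⟨e, he⟩ := exists_mulEquiv_pow_apply_of_zero hf i.val
  exact ⟨e.symm h, by rw [he, e.apply_symm_apply, ZMod.natCast_zmod_val]⟩

theorem displacementClosure_eq_top_of_factor [NeZero r]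
    (hf : ∀ i, ι[i].range.map f.toMonoidHom = ι[i + 1].range) {φ : MulAut G₁}
    (hφ : ∀ g, (f ^ r) (ι[0] g) = ι[0] (φ g)) (hφtop : φ.displacementClosure = ⊤) :
    f.displacementClosure = ⊤ := by
  have hι₀ : ∀ g, ι[0] g ∈ f.displacementClosure := by
    suffices φ.displacementClosure ≤ f.displacementClosure.comap ι[0] from
      fun g => this (hφtop ▸ mem_top g)
    refine normalClosure_le_normal ?_
    rintro _ ⟨g, rfl⟩
    simpa [← hφ] using f.inv_mul_pow_apply_mem_displacementClosure r (ι[0] g)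
  rw [eq_top_iff']
  intro x
  induction x using CoprodI.induction_on with
  | one => exact one_mem _
  | mul x y hx hy => exact mul_mem hx hy
  | of i h =>
    obtain ⟨g, hg⟩ := exists_pow_apply_of_zero_eq hf i h
    rw [← hg, ← mul_inv_cancel_left (ι[0] g) ((f ^ i.val) (ι[0] g))]
    exact mul_mem (hι₀ g) (f.inv_mul_pow_apply_mem_displacementClosure i.val _)

theorem exists_invariant_lift [NeZero r]
    (hf : ∀ i, ι[i].range.map f.toMonoidHom = ι[i + 1].range) {φ : MulAut G₁}
    (hφ : ∀ g, (f ^ r) (ι[0] g) = ι[0] (φ g)) {H : Type*} [Group H] (q : G₁ →* H)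
    (hq : ∀ g, q (φ g) = q g) :
    ∃ ψ : CoprodI (fun _ : ZMod r => G₁) →* H, (∀ x, ψ (f x) = ψ x) ∧ ∀ g, ψ (ι[0] g) = q g := by
  choose e he using exists_mulEquiv_pow_apply_of_zero hf
  let ψ := CoprodI.lift fun i : ZMod r => q.comp (e i.val).symm.toMonoidHom
  have hψ : ∀ n g, n < r → ψ ((f ^ n) (ι[0] g)) = q g := fun n g hn => by
    simp [ψ, he, ZMod.val_cast_of_lt hn]
  refine ⟨ψ, fun x => ?_, fun g => by simpa using hψ 0 g (NeZero.pos r)⟩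
  induction x using CoprodI.induction_on with
  | one => simp
  | mul x y hx hy => rw [map_mul, map_mul, map_mul, hx, hy]
  | of i h =>
    obtain ⟨g, hg⟩ := exists_pow_apply_of_zero_eq hf i h
    rw [← hg, ← MulAut.mul_apply, ← pow_succ', hψ _ g i.val_lt]
    rcases (Nat.add_one_le_of_lt i.val_lt).lt_or_eq with hlt | heq
    · exact hψ _ g hlt
    · rw [heq, hφ, ← hq g, ← hψ 0 (φ g) (NeZero.pos r), pow_zero, MulAut.one_apply]

theorem displacementClosure_factor_eq_top [NeZero r]
    (hf : ∀ i, ι[i].range.map f.toMonoidHom = ι[i + 1].range) {φ : MulAut G₁}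
    (hφ : ∀ g, (f ^ r) (ι[0] g) = ι[0] (φ g)) (htop : f.displacementClosure = ⊤) :
    φ.displacementClosure = ⊤ := by
  obtain ⟨ψ, hψf, hψ₀⟩ := exists_invariant_lift hf hφ (QuotientGroup.mk' φ.displacementClosure)
    fun g => (QuotientGroup.eq.2 (φ.inv_mul_apply_mem_displacementClosure g)).symm
  rw [eq_top_iff']
  intro g
  have hg : ψ (ι[0] g) = 1 := MulAut.displacementClosure_le_ker hψf (htop ▸ mem_top _)
  rwa [hψ₀, QuotientGroup.mk'_apply, QuotientGroup.eq_one_iff] at hg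

end FreeProduct

/-- With the same setup as Statement 0, `f` is meridianal (the normal closure of
`{g⁻¹ * f g}` is all of `G`) if and only if `φ` is a meridianal automorphism of `G₁`. -/
theorem stmt_1 (r : ℕ) (hr : 1 ≤ r) (G₁ : Type*) [Group G₁]
    (f : MulAut (Monoid.CoprodI (fun _ : ZMod r => G₁)))
    (hf : ∀ i : ZMod r,
      Subgroup.map f.toMonoidHom
        (MonoidHom.range (Monoid.CoprodI.of (M := fun _ : ZMod r => G₁) (i := i))) =
      MonoidHom.range (Monoid.CoprodI.of (M := fun _ : ZMod r => G₁) (i := i + 1)))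
    (φ : MulAut G₁)
    (hφ : ∀ g : G₁,
      (f ^ r) (Monoid.CoprodI.of (M := fun _ : ZMod r => G₁) (i := (0 : ZMod r)) g) =
        Monoid.CoprodI.of (M := fun _ : ZMod r => G₁) (i := (0 : ZMod r)) (φ g)) :
    Subgroup.normalClosure {x : Monoid.CoprodI (fun _ : ZMod r => G₁) | ∃ g, x = g⁻¹ * f g} = ⊤
      ↔ Subgroup.normalClosure {x : G₁ | ∃ g, x = g⁻¹ * φ g} = ⊤ := by
  have : NeZero r := ⟨by omega⟩
  exact ⟨displacementClosure_factor_eq_top hf hφ, displacementClosure_eq_top_of_factor hf hφ⟩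
end

section
/- Let r ≥ 1 and let G₁ be a group. Let G be the free product of the constant family of groups Gᵢ = G₁ indexed by ℤ/rℤ, with canonical inclusions ιᵢ : G₁ → G, and let f be an automorphism of G such that f(ιᵢ(G₁)) = ι_{i+1}(G₁) for all i ∈ ℤ/rℤ, so that f^r maps ι₀(G₁) onto itself and induces an automorphism φ of G₁ with f^r(ι₀(g)) = ι₀(φ(g)) for all g ∈ G₁. Then the map of the abelianization Gᵃᵇ to itself sending x to f_ab(x)·x⁻¹ is bijective if and only if the map of G₁ᵃᵇ to itself sending x to φ_ab(x)·x⁻¹ is bijective. -/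
/-!
Abelianizing the free product gives `Gᵃᵇ ≃ (ZMod r → G₁ᵃᵇ)`, and since `f` carries the `i`-th
factor to the `(i+1)`-st through some `ψᵢ : G₁ →* G₁`, `f_ab` becomes the twisted cyclic shift
`T x j = ψ_{j-1,ab} (x (j-1))`. The equation `T x * x⁻¹ = y` says `x (n+1) = ψₙ(x n) * (y (n+1))⁻¹`,
so a solution is determined by `x 0 = b`, and going once around the cycle the only constraint is
`Ψ b * b⁻¹ = c(y)` with `Ψ = ψ_{r-1} ∘ ⋯ ∘ ψ₀` and `c` surjective. Thus the fibres of
`x ↦ T x * x⁻¹` correspond to those of `b ↦ Ψ_ab b * b⁻¹`, and `Ψ = φ` because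
`f ^ r ∘ ι₀ = ι₀ ∘ Ψ`.
-/

open Function Monoid

section PrefixComp

variable {r : ℕ} {M : Type*}

def prefixComp [MulOneClass M] (g : ZMod r → M →* M) : ℕ → M →* M
  | 0 => MonoidHom.id M
  | n + 1 => (g n).comp (prefixComp g n)

lemma Abelianization.map_prefixComp [Group M] (g : ZMod r → M →* M) (n : ℕ) :
    Abelianization.map (prefixComp g n) = prefixComp (fun i => Abelianization.map (g i)) n := by
  induction n with
  | zero => exact Abelianization.map_id
  | succ n ih => rw [prefixComp, prefixComp, ← ih, Abelianization.map_comp]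

end PrefixComp

section TwistedShift

variable {r : ℕ} {B : Type*}

def twistedShift [MulOneClass B] (g : ZMod r → B →* B) : (ZMod r → B) →* (ZMod r → B) :=
  MonoidHom.pi fun j => (g (j - 1)).comp (Pi.evalMonoidHom (fun _ => B) (j - 1))

@[simp]
lemma twistedShift_apply [MulOneClass B] (g : ZMod r → B →* B) (x : ZMod r → B) (j : ZMod r) :
    twistedShift g x j = g (j - 1) (x (j - 1)) :=
  rfl

variable [CommGroup B] (g : ZMod r → B →* B)

def orbitSeq (b : B) (y : ZMod r → B) : ℕ → B
  | 0 => b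
  | n + 1 => g n (orbitSeq b y n) * (y (n + 1))⁻¹

lemma orbitSeq_eq_prefixComp_mul (b : B) (y : ZMod r → B) (n : ℕ) :
    orbitSeq g b y n = prefixComp g n b * orbitSeq g 1 y n := by
  induction n with
  | zero => simp [orbitSeq, prefixComp]
  | succ n ih => simp only [orbitSeq, prefixComp, ih, map_mul, MonoidHom.comp_apply, mul_assoc]

lemma orbitSeq_add_eq_of_eq {b : B} {y : ZMod r → B} (h : orbitSeq g b y r = b) (n : ℕ) :
    orbitSeq g b y (n + r) = orbitSeq g b y n := by
  induction n with
  | zero => simpa [orbitSeq] using h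
  | succ n ih => simp [Nat.add_right_comm n 1 r, orbitSeq, ih]

lemma orbitSeq_val_natCast {b : B} {y : ZMod r → B} (h : orbitSeq g b y r = b) (n : ℕ) :
    orbitSeq g b y (n : ZMod r).val = orbitSeq g b y n := by
  rw [ZMod.val_natCast]
  exact Periodic.map_mod_nat (orbitSeq_add_eq_of_eq g h) n

variable [NeZero r]

lemma twistedShift_mul_inv_eq_iff {x y : ZMod r → B} :
    twistedShift g x * x⁻¹ = y ↔ ∀ n : ℕ, x (n + 1) = g n (x n) * (y (n + 1))⁻¹ := by
  have hsurj : Surjective fun n : ℕ => (n + 1 : ZMod r) :=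
    fun j => ⟨(j - 1).val, by simp⟩
  rw [funext_iff, hsurj.forall]
  refine forall_congr' fun n => ?_
  simp only [Pi.mul_apply, Pi.inv_apply, twistedShift_apply, add_sub_cancel_right]
  rw [mul_inv_eq_iff_eq_mul, eq_mul_inv_iff_mul_eq, mul_comm, eq_comm]

lemma eq_orbitSeq_of_twistedShift_mul_inv_eq {x y : ZMod r → B} (h : twistedShift g x * x⁻¹ = y)
    (n : ℕ) : x n = orbitSeq g (x 0) y n := by
  induction n with
  | zero => simp [orbitSeq]
  | succ n ih => rw [Nat.cast_succ, (twistedShift_mul_inv_eq_iff g).1 h, ih, orbitSeq]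

lemma twistedShift_mul_inv_orbitSeq_val {b : B} {y : ZMod r → B} (h : orbitSeq g b y r = b) :
    twistedShift g (fun j => orbitSeq g b y j.val) * (fun j => orbitSeq g b y j.val)⁻¹ = y := by
  rw [twistedShift_mul_inv_eq_iff]
  intro n
  simp only [← Nat.cast_succ, orbitSeq_val_natCast g h, orbitSeq]

lemma existsUnique_twistedShift_mul_inv_eq_iff (y : ZMod r → B) :
    (∃! x, twistedShift g x * x⁻¹ = y) ↔ ∃! b, orbitSeq g b y r = b := by
  have hx0 {x} (hx : twistedShift g x * x⁻¹ = y) : orbitSeq g (x 0) y r = x 0 := by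
    rw [← eq_orbitSeq_of_twistedShift_mul_inv_eq g hx, ZMod.natCast_self]
  constructor
  · rintro ⟨x, hx, hunique⟩
    refine ⟨x 0, hx0 hx, fun b hb => ?_⟩
    rw [← hunique _ (twistedShift_mul_inv_orbitSeq_val g hb)]
    simp [orbitSeq]
  · rintro ⟨b, hb, hunique⟩
    refine ⟨_, twistedShift_mul_inv_orbitSeq_val g hb, fun x hx => funext fun j => ?_⟩
    rw [← ZMod.natCast_zmod_val j, eq_orbitSeq_of_twistedShift_mul_inv_eq g hx, hunique _ (hx0 hx),
      orbitSeq_val_natCast g hb]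

lemma orbitSeq_one_mulSingle_zero (c : B) : orbitSeq g 1 (Pi.mulSingle 0 c) r = c⁻¹ := by
  obtain ⟨s, rfl⟩ := Nat.exists_eq_succ_of_ne_zero (NeZero.ne r)
  have htrivial : ∀ n ≤ s, orbitSeq g 1 (Pi.mulSingle 0 c) n = 1 := by
    intro n hn
    induction n with
    | zero => rfl
    | succ n ih =>
      have hne : (n + 1 : ZMod (s + 1)) ≠ 0 := by
        rw [← Nat.cast_succ, Ne, ZMod.natCast_eq_zero_iff]
        exact Nat.not_dvd_of_pos_of_lt n.succ_pos (by omega)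
      simp [orbitSeq, ih (by omega), hne]
  simp [orbitSeq, htrivial s le_rfl]

theorem bijective_twistedShift_mul_inv_iff :
    Bijective (fun x => twistedShift g x * x⁻¹) ↔ Bijective (fun b => prefixComp g r b * b⁻¹) := by
  have hfix (y : ZMod r → B) (b : B) :
      orbitSeq g b y r = b ↔ prefixComp g r b * b⁻¹ = (orbitSeq g 1 y r)⁻¹ := by
    rw [orbitSeq_eq_prefixComp_mul, mul_inv_eq_iff_eq_mul, ← eq_mul_inv_iff_mul_eq, mul_comm b]
  have hsurj : Surjective fun y : ZMod r → B => (orbitSeq g 1 y r)⁻¹ :=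
    fun c => ⟨Pi.mulSingle 0 c, by simp [orbitSeq_one_mulSingle_zero]⟩
  simp only [bijective_iff_existsUnique, existsUnique_twistedShift_mul_inv_eq_iff, hfix]
  exact (hsurj.forall (p := fun c => ∃! b, prefixComp g r b * b⁻¹ = c)).symm

end TwistedShift

section CoprodI

variable {ι : Type*} [Fintype ι] [DecidableEq ι] {M : ι → Type*} [∀ i, Group (M i)]

lemma prod_comp_evalMonoidHom_mulSingle {N : Type*} [CommMonoid N] (F : ∀ i, M i →* N) (i : ι)
    (m : M i) : (∏ j, (F j).comp (Pi.evalMonoidHom M j)) (Pi.mulSingle i m) = F i m := by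
  rw [MonoidHom.finsetProd_apply, Fintype.prod_eq_single i fun j hj => by simp [hj]]
  simp

def abelianizationCoprodIEquivPi :
    Abelianization (CoprodI M) ≃* ((i : ι) → Abelianization (M i)) :=
  MonoidHom.toMulEquiv
    (Abelianization.lift (CoprodI.lift fun i => (MonoidHom.mulSingle _ i).comp Abelianization.of))
    (∏ i, (Abelianization.map CoprodI.of).comp (Pi.evalMonoidHom _ i))
    (Abelianization.hom_ext _ _ <| CoprodI.ext_hom _ _ fun i => by
      ext
      simp only [MonoidHom.comp_apply, Abelianization.lift_apply_of, CoprodI.lift_of,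
        MonoidHom.mulSingle_apply, prod_comp_evalMonoidHom_mulSingle]
      simp)
    (MonoidHom.functions_ext' _ _ _ fun i => Abelianization.hom_ext _ _ <| by
      ext
      simp only [MonoidHom.comp_apply, MonoidHom.mulSingle_apply, prod_comp_evalMonoidHom_mulSingle]
      simp)

@[simp]
lemma abelianizationCoprodIEquivPi_of_of {i : ι} (m : M i) :
    abelianizationCoprodIEquivPi (Abelianization.of (CoprodI.of m)) =
      Pi.mulSingle i (Abelianization.of m) := by
  simp [abelianizationCoprodIEquivPi]

end CoprodI

lemma MonoidHom.exists_comp_eq_of_range_le {G H K : Type*} [Group G] [Group H] [Group K]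
    {ι : G →* K} (hι : Injective ι) {F : H →* K} (h : F.range ≤ ι.range) :
    ∃ ψ : H →* G, ∀ x, F x = ι (ψ x) :=
  ⟨(MonoidHom.ofInjective hι).symm.toMonoidHom.comp (F.codRestrict ι.range fun x => h ⟨x, rfl⟩),
    fun x => by simp⟩

section CyclicFactors

variable {r : ℕ} {G : Type*}

lemma MulAut.pow_apply_eq_prefixComp [Monoid G] {K : Type*} [Monoid K] (ι : ZMod r → G →* K)
    (f : MulAut K) (ψ : ZMod r → G →* G) (hψ : ∀ i g, f (ι i g) = ι (i + 1) (ψ i g))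
    (n : ℕ) (g : G) :
    (f ^ n) (ι 0 g) = ι n (prefixComp ψ n g) := by
  induction n with
  | zero => simp [prefixComp]
  | succ n ih => rw [pow_succ', MulAut.mul_apply, ih, hψ, Nat.cast_succ]; rfl

lemma abelianizationCoprodIEquivPi_map [Group G] [NeZero r]
    (f : CoprodI (fun _ : ZMod r => G) →* CoprodI (fun _ : ZMod r => G)) (ψ : ZMod r → G →* G)
    (hψ : ∀ i g, f (CoprodI.of (i := i) g) = CoprodI.of (i := i + 1) (ψ i g))
    (a : Abelianization (CoprodI fun _ : ZMod r => G)) :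
    abelianizationCoprodIEquivPi (Abelianization.map f a) =
      twistedShift (fun i => Abelianization.map (ψ i)) (abelianizationCoprodIEquivPi a) := by
  suffices abelianizationCoprodIEquivPi.toMonoidHom.comp (Abelianization.map f) =
      (twistedShift fun i => Abelianization.map (ψ i)).comp
        abelianizationCoprodIEquivPi.toMonoidHom from
    DFunLike.congr_fun this a
  refine Abelianization.hom_ext _ _ (CoprodI.ext_hom _ _ fun i => ?_)
  ext m j
  obtain ⟨k, rfl⟩ : ∃ k, j = k + 1 := ⟨j - 1, (sub_add_cancel j 1).symm⟩
  rcases eq_or_ne k i with rfl | hk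
  · simp [hψ]
  · simp [hψ, hk]

end CyclicFactors

/-- With the same setup as Statement 0, the endomorphism `x ↦ f_ab x * x⁻¹` of the
abelianization of `G` is bijective if and only if the endomorphism `x ↦ φ_ab x * x⁻¹` of the
abelianization of `G₁` is bijective. -/
theorem stmt_2 (r : ℕ) (hr : 1 ≤ r) (G₁ : Type*) [Group G₁]
    (f : MulAut (Monoid.CoprodI (fun _ : ZMod r => G₁)))
    (hf : ∀ i : ZMod r,
      Subgroup.map f.toMonoidHom
        (MonoidHom.range (Monoid.CoprodI.of (M := fun _ : ZMod r => G₁) (i := i))) =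
      MonoidHom.range (Monoid.CoprodI.of (M := fun _ : ZMod r => G₁) (i := i + 1)))
    (φ : MulAut G₁)
    (hφ : ∀ g : G₁,
      (f ^ r) (Monoid.CoprodI.of (M := fun _ : ZMod r => G₁) (i := (0 : ZMod r)) g) =
        Monoid.CoprodI.of (M := fun _ : ZMod r => G₁) (i := (0 : ZMod r)) (φ g)) :
    Function.Bijective
        (fun x : Abelianization (Monoid.CoprodI (fun _ : ZMod r => G₁)) =>
          Abelianization.map f.toMonoidHom x * x⁻¹)
      ↔ Function.Bijective
        (fun x : Abelianization G₁ => Abelianization.map φ.toMonoidHom x * x⁻¹) := by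
  have : NeZero r := ⟨by omega⟩
  choose ψ hψ using fun i : ZMod r =>
    MonoidHom.exists_comp_eq_of_range_le (CoprodI.of_injective (M := fun _ => G₁) (i + 1))
      (F := f.toMonoidHom.comp CoprodI.of) (by rw [MonoidHom.range_comp, hf i])
  have hφψ : prefixComp ψ r = φ.toMonoidHom := by
    ext g
    apply CoprodI.of_injective (M := fun _ : ZMod r => G₁) 0
    have := MulAut.pow_apply_eq_prefixComp (fun i => CoprodI.of (i := i)) f ψ hψ r g
    rw [ZMod.natCast_self, hφ] at this
    exact this.symm
  have hconj : (fun x => Abelianization.map f.toMonoidHom x * x⁻¹) =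
      abelianizationCoprodIEquivPi.symm ∘
        (fun y => twistedShift (fun i => Abelianization.map (ψ i)) y * y⁻¹) ∘
        abelianizationCoprodIEquivPi := by
    funext x
    simp [← abelianizationCoprodIEquivPi_map f.toMonoidHom ψ hψ]
  rw [hconj, EquivLike.comp_bijective, EquivLike.bijective_comp, bijective_twistedShift_mul_inv_iff,
    ← Abelianization.map_prefixComp, hφψ]
end

section
/- Let r ≥ 1 and let G₁ be a group. Let G be the free product of the constant family of groups Gᵢ = G₁ indexed by ℤ/rℤ, with canonical inclusions ιᵢ : G₁ → G, and let f be an automorphism of G such that f(ιᵢ(G₁)) = ι_{i+1}(G₁) for all i ∈ ℤ/rℤ, so that f^r maps ι₀(G₁) onto itself and induces an automorphism φ of G₁ with f^r(ι₀(g)) = ι₀(φ(g)) for all g ∈ G₁. Then the semidirect product G ⋊_f ℤ, where the generator of ℤ acts on G by f, is isomorphic to the group presented on the generating set G₁ ⊔ {t} (one generator for each element of G₁, plus one extra generator t) with relators the words g·h·(g·h)⁻¹ for all g, h ∈ G₁ (the multiplication table of G₁) together with the words t^r·g·t^{−r}·(φ(g))⁻¹ for all g ∈ G₁. -/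
/-!
Write `t` for the generator of `ℤ` and `θₖ` (`shiftEquiv`) for the automorphism of `G₁` with
`fᵏ (ι₀ g) = ι_k (θₖ g)`. The map from the presented group sends `g ↦ ι₀ g` and `t ↦ t`; the
relators hold because conjugation by `tʳ` is `fʳ`, which acts on `ι₀(G₁)` through `φ`. The
inverse sends `ι_k g` to `tᵏ θₖ⁻¹(g) t⁻ᵏ`. This does not depend on the representative `k ∈ ℤ` of
the index, because `θ_{k+r} = θₖ ∘ φ` and `tʳ g t⁻ʳ = φ g`, and it intertwines `f` with
conjugation by `t`, so it extends to the semidirect product.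
-/

open Monoid Multiplicative

section RangeEquiv

variable {G G' H K : Type*} [Group G] [Group G'] [Group H] [Group K]

noncomputable def MulEquiv.ofMapRangeEq {α : H →* G} {β : K →* G'} (hα : Function.Injective α)
    (hβ : Function.Injective β) (e : G ≃* G') (h : α.range.map (e : G →* G') = β.range) :
    H ≃* K :=
  (MonoidHom.ofInjective hα).trans <| (e.subgroupMap α.range).trans <|
    (MulEquiv.subgroupCongr h).trans (MonoidHom.ofInjective hβ).symm

theorem MulEquiv.apply_ofMapRangeEq {α : H →* G} {β : K →* G'} (hα : Function.Injective α)
    (hβ : Function.Injective β) (e : G ≃* G') (h : α.range.map (e : G →* G') = β.range)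
    (x : H) : β (MulEquiv.ofMapRangeEq hα hβ e h x) = e (α x) := by
  simp only [MulEquiv.ofMapRangeEq, MulEquiv.trans_apply]
  rw [MonoidHom.apply_ofInjective_symm]
  rfl

end RangeEquiv

theorem MonoidHom.map_zpow_apply_eq_conj {G H : Type*} [Group G] [Group H] (ψ : G →* H)
    {f : MulAut G} {t : H} (hf : ∀ x, ψ (f x) = t * ψ x * t⁻¹) (n : ℤ) (x : G) :
    ψ ((f ^ n) x) = t ^ n * ψ x * (t ^ n)⁻¹ := by
  induction n using Int.induction_on generalizing x with
  | zero => simp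
  | succ k ih => rw [zpow_add_one, MulAut.mul_apply, ih, hf]; group
  | pred k ih =>
    have hinv : ψ (f⁻¹ x) = t⁻¹ * ψ x * t := by
      have h := hf (f⁻¹ x)
      rw [MulAut.apply_inv_self] at h
      rw [h]; group
    rw [zpow_sub_one, MulAut.mul_apply, ih, hinv]; group

theorem SemidirectProduct.inr_zpow_mul_inl_mul_inv {N : Type*} [Group N] (f : MulAut N)
    (k : ℤ) (n : N) :
    (SemidirectProduct.inr (ofAdd 1) ^ k : N ⋊[zpowersHom (MulAut N) f] Multiplicative ℤ) *
        SemidirectProduct.inl n * (SemidirectProduct.inr (ofAdd 1) ^ k)⁻¹ =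
      SemidirectProduct.inl ((f ^ k) n) := by
  rw [← map_zpow, ← map_inv, ← SemidirectProduct.inl_aut]
  simp

namespace CoprodIShift

variable {r : ℕ} {G₁ : Type*} [Group G₁]

abbrev ι (i : ZMod r) : G₁ →* CoprodI fun _ : ZMod r => G₁ :=
  CoprodI.of (M := fun _ : ZMod r => G₁) (i := i)

theorem ι_injective (i : ZMod r) : Function.Injective (ι (G₁ := G₁) i) :=
  CoprodI.of_injective i

section Shift

variable (f : MulAut (CoprodI fun _ : ZMod r => G₁))

theorem map_inv_range_of
    (hf : ∀ i : ZMod r, (ι i).range.map f.toMonoidHom = (ι (i + 1)).range) (i : ZMod r) :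
    (ι (i + 1)).range.map (MulEquiv.toMonoidHom f⁻¹) = (ι (G₁ := G₁) i).range := by
  rw [← hf i, Subgroup.map_map]
  convert Subgroup.map_id _
  ext x
  simp

theorem map_zpow_range_of
    (hf : ∀ i : ZMod r, (ι i).range.map f.toMonoidHom = (ι (i + 1)).range) (k : ℤ) (i : ZMod r) :
    (ι i).range.map (f ^ k).toMonoidHom = (ι (G₁ := G₁) (i + (k : ZMod r))).range := by
  induction k using Int.induction_on generalizing i with
  | zero =>
    simp only [zpow_zero, Int.cast_zero, add_zero]
    exact Subgroup.map_id _
  | succ k ih =>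
    rw [zpow_add_one]
    change Subgroup.map ((f ^ (k : ℤ)).toMonoidHom.comp f.toMonoidHom) _ = _
    rw [← Subgroup.map_map, hf, ih]
    congr 2
    push_cast
    ring
  | pred k ih =>
    rw [zpow_sub_one]
    change Subgroup.map ((f ^ (-(k : ℤ))).toMonoidHom.comp (MulEquiv.toMonoidHom f⁻¹)) _ = _
    rw [← Subgroup.map_map, ← sub_add_cancel i 1, map_inv_range_of f hf, ih]
    congr 2
    push_cast
    ring

variable (hf : ∀ i : ZMod r, (ι i).range.map f.toMonoidHom = (ι (i + 1)).range)

noncomputable def shiftEquiv (k : ℤ) : G₁ ≃* G₁ :=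
  MulEquiv.ofMapRangeEq (ι_injective 0) (ι_injective (k : ZMod r)) (f ^ k)
    (by simpa using map_zpow_range_of f hf k 0)

theorem of_shiftEquiv (k : ℤ) (g : G₁) :
    ι (k : ZMod r) (shiftEquiv f hf k g) = (f ^ k) (ι 0 g) :=
  MulEquiv.apply_ofMapRangeEq (ι_injective _) (ι_injective _) _ _ g

theorem of_eq_zpow_apply_of (i : ZMod r) (g : G₁) :
    ι i g = (f ^ (i.cast : ℤ)) (ι 0 ((shiftEquiv f hf i.cast).symm g)) := by
  rw [← of_shiftEquiv f hf, MulEquiv.apply_symm_apply, ZMod.intCast_zmod_cast]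

theorem shiftEquiv_add_self (φ : MulAut G₁)
    (hφ : ∀ g : G₁, (f ^ r) (ι 0 g) = ι 0 (φ g)) (k : ℤ) (g : G₁) :
    shiftEquiv f hf (k + r) g = shiftEquiv f hf k (φ g) := by
  apply ι_injective ((k + r : ℤ) : ZMod r)
  have hk : ((k + r : ℤ) : ZMod r) = k := by simp
  rw [of_shiftEquiv, zpow_add, MulAut.mul_apply, zpow_natCast, hφ, hk, of_shiftEquiv]

end Shift

abbrev shiftRels (r : ℕ) (φ : MulAut G₁) : Set (FreeGroup (G₁ ⊕ Unit)) :=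
  {w : FreeGroup (G₁ ⊕ Unit) |
    (∃ g h : G₁, w = FreeGroup.of (Sum.inl g) * FreeGroup.of (Sum.inl h) *
        (FreeGroup.of (Sum.inl (g * h)))⁻¹) ∨
    (∃ g : G₁, w = FreeGroup.of (Sum.inr ()) ^ r * FreeGroup.of (Sum.inl g) *
        (FreeGroup.of (Sum.inr ()) ^ r)⁻¹ * (FreeGroup.of (Sum.inl (φ g)))⁻¹)}

section Presentation

variable (r) (φ : MulAut G₁)

def gen : G₁ →* PresentedGroup (shiftRels r φ) :=
  MonoidHom.mk' (fun g => PresentedGroup.of (Sum.inl g)) fun a b =>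
    (PresentedGroup.mk_eq_mk_of_mul_inv_mem (Or.inl ⟨a, b, rfl⟩)).symm

def stableLetter : PresentedGroup (shiftRels r φ) := PresentedGroup.of (Sum.inr ())

theorem stableLetter_pow_mul_gen_mul (g : G₁) :
    stableLetter r φ ^ r * gen r φ g * (stableLetter r φ ^ r)⁻¹ = gen r φ (φ g) :=
  PresentedGroup.mk_eq_mk_of_mul_inv_mem (Or.inr ⟨g, rfl⟩)

end Presentation

section Isomorphism

variable (f : MulAut (CoprodI fun _ : ZMod r => G₁))
  (hf : ∀ i : ZMod r, (ι i).range.map f.toMonoidHom = (ι (i + 1)).range) (φ : MulAut G₁)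

noncomputable def factorHom (k : ℤ) : G₁ →* PresentedGroup (shiftRels r φ) :=
  (MulAut.conj (stableLetter r φ ^ k)).toMonoidHom.comp
    ((gen r φ).comp (shiftEquiv f hf k).symm.toMonoidHom)

theorem factorHom_shiftEquiv (k : ℤ) (g : G₁) :
    factorHom f hf φ k (shiftEquiv f hf k g) =
      stableLetter r φ ^ k * gen r φ g * (stableLetter r φ ^ k)⁻¹ := by
  simp only [factorHom, MonoidHom.comp_apply, MulEquiv.coe_toMonoidHom,
    MulEquiv.symm_apply_apply, MulAut.conj_apply]

theorem factorHom_periodic (hφ : ∀ g : G₁, (f ^ r) (ι 0 g) = ι 0 (φ g)) :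
    Function.Periodic (factorHom f hf φ) (r : ℤ) := by
  intro k
  ext x
  obtain ⟨g, rfl⟩ := (shiftEquiv f hf (k + r)).surjective x
  rw [factorHom_shiftEquiv, shiftEquiv_add_self f hf φ hφ, factorHom_shiftEquiv,
    ← stableLetter_pow_mul_gen_mul, zpow_add, zpow_natCast]
  group

theorem factorHom_eq_of_intCast_eq (hφ : ∀ g : G₁, (f ^ r) (ι 0 g) = ι 0 (φ g)) {a b : ℤ}
    (h : (a : ZMod r) = b) : factorHom f hf φ a = factorHom f hf φ b := by
  obtain ⟨m, hm⟩ := (ZMod.intCast_eq_intCast_iff_dvd_sub a b r).1 h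
  have := (factorHom_periodic f hf φ hφ).zsmul m a
  rw [smul_eq_mul] at this
  rw [show b = a + m * r by linarith, this]

noncomputable def coprodToPresented :
    (CoprodI fun _ : ZMod r => G₁) →* PresentedGroup (shiftRels r φ) :=
  CoprodI.lift fun i => factorHom f hf φ i.cast

theorem coprodToPresented_zpow_apply_of (hφ : ∀ g : G₁, (f ^ r) (ι 0 g) = ι 0 (φ g)) (k : ℤ)
    (g : G₁) :
    coprodToPresented f hf φ ((f ^ k) (ι 0 g)) =
      stableLetter r φ ^ k * gen r φ g * (stableLetter r φ ^ k)⁻¹ := by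
  rw [← of_shiftEquiv f hf, coprodToPresented, CoprodI.lift_of,
    factorHom_eq_of_intCast_eq f hf φ hφ (ZMod.intCast_zmod_cast _), factorHom_shiftEquiv]

theorem coprodToPresented_apply (hφ : ∀ g : G₁, (f ^ r) (ι 0 g) = ι 0 (φ g))
    (x : CoprodI fun _ : ZMod r => G₁) :
    coprodToPresented f hf φ (f x) =
      stableLetter r φ * coprodToPresented f hf φ x * (stableLetter r φ)⁻¹ := by
  induction x using CoprodI.induction_on with
  | one => simp
  | of i g =>
    rw [of_eq_zpow_apply_of f hf i g, ← MulAut.mul_apply, ← zpow_one_add,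
      coprodToPresented_zpow_apply_of f hf φ hφ, coprodToPresented_zpow_apply_of f hf φ hφ,
      zpow_one_add]
    group
  | mul x y hx hy =>
    rw [map_mul, map_mul, hx, hy, map_mul]
    group

noncomputable def semidirectToPresented (hφ : ∀ g : G₁, (f ^ r) (ι 0 g) = ι 0 (φ g)) :
    (CoprodI fun _ : ZMod r => G₁) ⋊[zpowersHom (MulAut _) f] Multiplicative ℤ →*
      PresentedGroup (shiftRels r φ) :=
  SemidirectProduct.lift (coprodToPresented f hf φ) (zpowersHom _ (stableLetter r φ)) fun n =>
    MonoidHom.ext fun x => (coprodToPresented f hf φ).map_zpow_apply_eq_conj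
      (coprodToPresented_apply f hf φ hφ) n.toAdd x

noncomputable def presentedToSemidirect (hφ : ∀ g : G₁, (f ^ r) (ι 0 g) = ι 0 (φ g)) :
    PresentedGroup (shiftRels r φ) →*
      (CoprodI fun _ : ZMod r => G₁) ⋊[zpowersHom (MulAut _) f] Multiplicative ℤ :=
  PresentedGroup.toGroup (f := Sum.elim (fun g => SemidirectProduct.inl (ι 0 g))
    fun _ => SemidirectProduct.inr (ofAdd 1)) <| by
  rintro w (⟨g, h, rfl⟩ | ⟨g, rfl⟩)
  · simp
  · simp only [map_mul, map_inv, map_pow, FreeGroup.lift_apply_of, Sum.elim_inl, Sum.elim_inr]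
    rw [← zpow_natCast, SemidirectProduct.inr_zpow_mul_inl_mul_inv, zpow_natCast, hφ,
      mul_inv_cancel]

theorem semidirectToPresented_inl (hφ : ∀ g : G₁, (f ^ r) (ι 0 g) = ι 0 (φ g))
    (x : CoprodI fun _ : ZMod r => G₁) :
    semidirectToPresented f hf φ hφ (SemidirectProduct.inl x) = coprodToPresented f hf φ x :=
  SemidirectProduct.lift_inl _ _ _ x

theorem semidirectToPresented_inr_ofAdd_one (hφ : ∀ g : G₁, (f ^ r) (ι 0 g) = ι 0 (φ g)) :
    semidirectToPresented f hf φ hφ (SemidirectProduct.inr (ofAdd 1)) = stableLetter r φ := by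
  simp [semidirectToPresented]

theorem presentedToSemidirect_gen (hφ : ∀ g : G₁, (f ^ r) (ι 0 g) = ι 0 (φ g)) (g : G₁) :
    presentedToSemidirect f φ hφ (gen r φ g) = SemidirectProduct.inl (ι 0 g) :=
  PresentedGroup.toGroup.of _

theorem presentedToSemidirect_stableLetter (hφ : ∀ g : G₁, (f ^ r) (ι 0 g) = ι 0 (φ g)) :
    presentedToSemidirect f φ hφ (stableLetter r φ) = SemidirectProduct.inr (ofAdd 1) :=
  PresentedGroup.toGroup.of _

theorem presentedToSemidirect_comp_semidirectToPresented
    (hφ : ∀ g : G₁, (f ^ r) (ι 0 g) = ι 0 (φ g)) :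
    (presentedToSemidirect f φ hφ).comp (semidirectToPresented f hf φ hφ) = MonoidHom.id _ := by
  apply SemidirectProduct.hom_ext
  · refine CoprodI.ext_hom _ _ fun i => MonoidHom.ext fun g => ?_
    simp only [MonoidHom.comp_apply, MonoidHom.id_apply]
    rw [of_eq_zpow_apply_of f hf i g, semidirectToPresented_inl,
      coprodToPresented_zpow_apply_of f hf φ hφ, map_mul, map_mul, map_inv, map_zpow,
      presentedToSemidirect_gen, presentedToSemidirect_stableLetter,
      SemidirectProduct.inr_zpow_mul_inl_mul_inv]
  · refine MonoidHom.ext_mint ?_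
    simp only [MonoidHom.comp_apply, MonoidHom.id_apply]
    rw [semidirectToPresented_inr_ofAdd_one, presentedToSemidirect_stableLetter]

theorem semidirectToPresented_comp_presentedToSemidirect
    (hφ : ∀ g : G₁, (f ^ r) (ι 0 g) = ι 0 (φ g)) :
    (semidirectToPresented f hf φ hφ).comp (presentedToSemidirect f φ hφ) = MonoidHom.id _ := by
  refine PresentedGroup.ext fun x => ?_
  rcases x with g | ⟨⟩
  · change semidirectToPresented f hf φ hφ (presentedToSemidirect f φ hφ (gen r φ g)) = gen r φ g
    rw [presentedToSemidirect_gen, semidirectToPresented_inl]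
    simpa using coprodToPresented_zpow_apply_of f hf φ hφ 0 g
  · change semidirectToPresented f hf φ hφ (presentedToSemidirect f φ hφ (stableLetter r φ)) =
      stableLetter r φ
    rw [presentedToSemidirect_stableLetter, semidirectToPresented_inr_ofAdd_one]

noncomputable def semidirectEquivPresented (hφ : ∀ g : G₁, (f ^ r) (ι 0 g) = ι 0 (φ g)) :
    (CoprodI fun _ : ZMod r => G₁) ⋊[zpowersHom (MulAut _) f] Multiplicative ℤ ≃*
      PresentedGroup (shiftRels r φ) :=
  MonoidHom.toMulEquiv (semidirectToPresented f hf φ hφ) (presentedToSemidirect f φ hφ)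
    (presentedToSemidirect_comp_semidirectToPresented f hf φ hφ)
    (semidirectToPresented_comp_presentedToSemidirect f hf φ hφ)

end Isomorphism

end CoprodIShift

theorem stmt_3_general (r : ℕ) (G₁ : Type*) [Group G₁]
    (f : MulAut (Monoid.CoprodI (fun _ : ZMod r => G₁)))
    (hf : ∀ i : ZMod r,
      Subgroup.map f.toMonoidHom
        (MonoidHom.range (Monoid.CoprodI.of (M := fun _ : ZMod r => G₁) (i := i))) =
      MonoidHom.range (Monoid.CoprodI.of (M := fun _ : ZMod r => G₁) (i := i + 1)))
    (φ : MulAut G₁)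
    (hφ : ∀ g : G₁,
      (f ^ r) (Monoid.CoprodI.of (M := fun _ : ZMod r => G₁) (i := (0 : ZMod r)) g) =
        Monoid.CoprodI.of (M := fun _ : ZMod r => G₁) (i := (0 : ZMod r)) (φ g)) :
    Nonempty (
      (Monoid.CoprodI (fun _ : ZMod r => G₁)
          ⋊[zpowersHom (MulAut (Monoid.CoprodI (fun _ : ZMod r => G₁))) f] Multiplicative ℤ)
      ≃* PresentedGroup
          {w : FreeGroup (G₁ ⊕ Unit) |
            (∃ g h : G₁, w = FreeGroup.of (Sum.inl g) * FreeGroup.of (Sum.inl h) *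
                (FreeGroup.of (Sum.inl (g * h)))⁻¹) ∨
            (∃ g : G₁, w = FreeGroup.of (Sum.inr ()) ^ r * FreeGroup.of (Sum.inl g) *
                (FreeGroup.of (Sum.inr ()) ^ r)⁻¹ * (FreeGroup.of (Sum.inl (φ g)))⁻¹)}) :=
  ⟨CoprodIShift.semidirectEquivPresented f hf φ hφ⟩

/-- With the same setup as Statement 0, the semidirect product `G ⋊_f ℤ` (the
generator of `ℤ` acting by `f`) is isomorphic to the group presented on the generating set
`G₁ ⊕ Unit` (a generator for each element of `G₁`, plus one extra generator `t = Sum.inr ()`)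
with relators the multiplication-table words `g·h·(g·h)⁻¹` for `g, h ∈ G₁` together with the
words `t^r·g·t^{-r}·(φ g)⁻¹` for `g ∈ G₁`. -/
theorem stmt_3 (r : ℕ) (hr : 1 ≤ r) (G₁ : Type*) [Group G₁]
    (f : MulAut (Monoid.CoprodI (fun _ : ZMod r => G₁)))
    (hf : ∀ i : ZMod r,
      Subgroup.map f.toMonoidHom
        (MonoidHom.range (Monoid.CoprodI.of (M := fun _ : ZMod r => G₁) (i := i))) =
      MonoidHom.range (Monoid.CoprodI.of (M := fun _ : ZMod r => G₁) (i := i + 1)))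
    (φ : MulAut G₁)
    (hφ : ∀ g : G₁,
      (f ^ r) (Monoid.CoprodI.of (M := fun _ : ZMod r => G₁) (i := (0 : ZMod r)) g) =
        Monoid.CoprodI.of (M := fun _ : ZMod r => G₁) (i := (0 : ZMod r)) (φ g)) :
    Nonempty (
      (Monoid.CoprodI (fun _ : ZMod r => G₁)
          ⋊[zpowersHom (MulAut (Monoid.CoprodI (fun _ : ZMod r => G₁))) f] Multiplicative ℤ)
      ≃* PresentedGroup
          {w : FreeGroup (G₁ ⊕ Unit) |
            (∃ g h : G₁, w = FreeGroup.of (Sum.inl g) * FreeGroup.of (Sum.inl h) *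
                (FreeGroup.of (Sum.inl (g * h)))⁻¹) ∨
            (∃ g : G₁, w = FreeGroup.of (Sum.inr ()) ^ r * FreeGroup.of (Sum.inl g) *
                (FreeGroup.of (Sum.inr ()) ^ r)⁻¹ * (FreeGroup.of (Sum.inl (φ g)))⁻¹)}) :=
  stmt_3_general r G₁ f hf φ hφ
end

section
/- Let d ≥ 1, r ≥ 1, and let s be an integer with gcd(s, d) = 1. Let π be the group with presentation ⟨a, t | a^d = 1, t^r·a·t^{−r} = a^s⟩, i.e. the quotient of the free group on two generators a and t by the normal closure of the relators a^d and t^r·a·t^{−r}·a^{−s}. Let ε : π → ℤ be the homomorphism determined by ε(a) = 0 and ε(t) = 1 (which is well defined since both relators map to 0). Then the kernel of ε is isomorphic to the free product of r copies of the cyclic group ℤ/dℤ. -/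
/-- The two generators `a` and `t` of the presentation `⟨a, t | a^d = 1, t^r a t^{-r} = a^s⟩`,
encoded as the elements of `Bool`. -/
def stmt5Gen_a : Bool := true
def stmt5Gen_t : Bool := false

/-- The relators `a^d` and `t^r · a · t^{-r} · a^{-s}`. -/
def stmt5Rels (d r : ℕ) (s : ℤ) : Set (FreeGroup Bool) :=
  {FreeGroup.of stmt5Gen_a ^ d,
   FreeGroup.of stmt5Gen_t ^ r * FreeGroup.of stmt5Gen_a * (FreeGroup.of stmt5Gen_t ^ r)⁻¹ *
     (FreeGroup.of stmt5Gen_a ^ s)⁻¹}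

/-!
Let `K` be the free product of copies `K₀, …, K_{r-1}` of `ℤ/dℤ` and let `σ` be the automorphism
of `K` carrying `Kᵢ` identically onto `K_{i+1}` for `i < r - 1` and `K_{r-1}` onto `K₀` by
`x ↦ x ^ s` (an automorphism because `s` is a unit mod `d`). Sending `a` to the generator of `K₀`
and `t` to the generator of `ℤ` gives an isomorphism `π ≃ K ⋊[σ] ℤ`, whose inverse sends the
generator of `Kᵢ` to `tⁱ a t⁻ⁱ`. It carries `ε` to the projection onto `ℤ`, whose kernel is `K`.
-/

open Multiplicative

section ZModHom

variable {d : ℕ}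

theorem monoidHom_ext_zmod {M : Type*} [Monoid M] {f g : Multiplicative (ZMod d) →* M}
    (h : f (ofAdd 1) = g (ofAdd 1)) : f = g := by
  let c : Multiplicative ℤ →* Multiplicative (ZMod d) :=
    AddMonoidHom.toMultiplicative (Int.castAddHom (ZMod d))
  have hc : f.comp c = g.comp c := MonoidHom.ext_mint (by simpa [c] using h)
  refine MonoidHom.ext fun x => ?_
  obtain ⟨n, hn⟩ := ZMod.intCast_surjective (toAdd x)
  rw [← ofAdd_toAdd x, ← hn]
  exact DFunLike.congr_fun hc (ofAdd n)

variable {G : Type*} [Group G] (g : G) (hg : g ^ d = 1)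

noncomputable def zmodPowersHom : Multiplicative (ZMod d) →* G :=
  AddMonoidHom.toMultiplicativeLeft
    (ZMod.lift d ⟨MonoidHom.toAdditiveRight (zpowersHom G g), by simp [hg]⟩)

theorem zmodPowersHom_ofAdd_intCast (n : ℤ) :
    zmodPowersHom g hg (ofAdd (n : ZMod d)) = g ^ n := by
  simp [zmodPowersHom]

theorem zmodPowersHom_ofAdd_one : zmodPowersHom g hg (ofAdd 1) = g := by
  simpa using zmodPowersHom_ofAdd_intCast g hg 1

end ZModHom

noncomputable def zmodZPowAut {d : ℕ} {s : ℤ} (hs : Int.gcd s d = 1) :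
    MulAut (Multiplicative (ZMod d)) :=
  AddEquiv.toMultiplicative
    (AddAut.mulRight (ZMod.unitOfIsCoprime s (Int.isCoprime_iff_gcd_eq_one.mpr hs)))

theorem zmodZPowAut_ofAdd_one {d : ℕ} {s : ℤ} (hs : Int.gcd s d = 1) :
    zmodZPowAut hs (ofAdd 1) = ofAdd 1 ^ s := by
  simp [zmodZPowAut, ZMod.unitOfIsCoprime, ← ofAdd_zsmul]

namespace Monoid.CoprodI

variable {ι G : Type*} [Monoid G]

noncomputable def permAut (e : Equiv.Perm ι) (f : ι → MulAut G) :
    MulAut (CoprodI fun _ : ι => G) :=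
  MonoidHom.toMulEquiv (lift fun i => (of (i := e i)).comp (f i).toMonoidHom)
    (lift fun j => (of (i := e.symm j)).comp (f (e.symm j)).symm.toMonoidHom)
    (ext_hom _ _ fun i => MonoidHom.ext fun x => by simp)
    (ext_hom _ _ fun i => MonoidHom.ext fun x => by simp)

theorem permAut_of (e : Equiv.Perm ι) (f : ι → MulAut G) (i : ι) (x : G) :
    permAut e f (of (i := i) x) = of (i := e i) (f i x) :=
  lift_of _ _

variable (n : ℕ) (θ : MulAut G)

noncomputable def twistedRotate : MulAut (CoprodI fun _ : Fin (n + 1) => G) :=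
  permAut (finRotate (n + 1)) fun i => if i = Fin.last n then θ else 1

theorem twistedRotate_of_last (x : G) :
    twistedRotate n θ (of (i := Fin.last n) x) = of (i := 0) (θ x) := by
  simp [twistedRotate, permAut_of]

theorem twistedRotate_of_ne_last {i : Fin (n + 1)} (hi : i ≠ Fin.last n) (x : G) :
    twistedRotate n θ (of (i := i) x) = of (i := finRotate (n + 1) i) x := by
  simp [twistedRotate, permAut_of, hi]

theorem twistedRotate_pow_of_zero {k : ℕ} (hk : k ≤ n) (x : G) :
    (twistedRotate n θ ^ k) (of (i := 0) x) = of (i := ⟨k, Nat.lt_succ_of_le hk⟩) x := by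
  induction k with
  | zero => rfl
  | succ k ih =>
    have hkn : k < n := hk
    rw [pow_succ', MulAut.mul_apply, ih hkn.le,
      twistedRotate_of_ne_last n θ (Fin.ne_of_lt (Fin.mk_lt_of_lt_val hkn)), finRotate_of_lt hkn]

theorem twistedRotate_pow_succ_of_zero (x : G) :
    (twistedRotate n θ ^ (n + 1)) (of (i := 0) x) = of (i := 0) (θ x) := by
  rw [pow_succ', MulAut.mul_apply, twistedRotate_pow_of_zero n θ le_rfl]
  exact twistedRotate_of_last n θ x

end Monoid.CoprodI

section Semidirect

open SemidirectProduct

variable {N P : Type*} [Group N] [Group P]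

theorem MonoidHom.map_zpow_mulAut_apply {f : N →* P} {σ : MulAut N} {t : P}
    (h : ∀ k, f (σ k) = t * f k * t⁻¹) (m : ℤ) (k : N) :
    f ((σ ^ m) k) = t ^ m * f k * (t ^ m)⁻¹ := by
  induction m using Int.induction_on generalizing k with
  | zero => simp
  | succ m ih =>
    rw [zpow_add_one, MulAut.mul_apply, ih, h, zpow_add_one]
    group
  | pred m ih =>
    have h_inv : f (σ⁻¹ k) = t⁻¹ * f k * t := by
      simpa [← mul_assoc] using congrArg (fun p => t⁻¹ * p * t) (h (σ⁻¹ k)).symm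
    rw [zpow_sub_one, MulAut.mul_apply, ih, h_inv, zpow_sub_one]
    group

noncomputable def SemidirectProduct.liftZPowers (f : N →* P) (σ : MulAut N) (t : P)
    (h : ∀ k, f (σ k) = t * f k * t⁻¹) :
    N ⋊[zpowersHom _ σ] Multiplicative ℤ →* P :=
  lift f (zpowersHom P t) fun g => MonoidHom.ext fun k => by
    simpa [← map_zpow] using MonoidHom.map_zpow_mulAut_apply h (toAdd g) k

@[simp]
theorem SemidirectProduct.liftZPowers_inl {f : N →* P} {σ : MulAut N} {t : P}
    (h : ∀ k, f (σ k) = t * f k * t⁻¹) (k : N) : liftZPowers f σ t h (inl k) = f k :=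
  lift_inl _ _ _ _

@[simp]
theorem SemidirectProduct.liftZPowers_inr {f : N →* P} {σ : MulAut N} {t : P}
    (h : ∀ k, f (σ k) = t * f k * t⁻¹) (g : Multiplicative ℤ) :
    liftZPowers f σ t h (inr g) = t ^ toAdd g :=
  lift_inr _ _ _ _

variable {G H : Type*} [Group G] [Group H] {φ : H →* MulAut N}

noncomputable def MonoidHom.kerMulEquivOfRightHom (e : G ≃* N ⋊[φ] H) (ε : G →* H)
    (h : rightHom.comp e.toMonoidHom = ε) : ε.ker ≃* N :=
  have h_map : ε.ker.map e.toMonoidHom = (SemidirectProduct.inl : N →* N ⋊[φ] H).range := by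
    rw [range_inl_eq_ker_rightHom, ← h, ← MonoidHom.comap_ker,
      Subgroup.map_comap_eq_self_of_surjective e.surjective]
  (e.subgroupMap ε.ker).trans <|
    (MulEquiv.subgroupCongr h_map).trans
      (MonoidHom.ofInjective SemidirectProduct.inl_injective).symm

end Semidirect

namespace Stmt5

open Monoid SemidirectProduct

section Presentation

variable (d r : ℕ) (s : ℤ)

def genA : PresentedGroup (stmt5Rels d r s) := PresentedGroup.of stmt5Gen_a

def genT : PresentedGroup (stmt5Rels d r s) := PresentedGroup.of stmt5Gen_t

theorem genA_pow : genA d r s ^ d = 1 :=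
  (map_pow _ _ _).symm.trans (PresentedGroup.one_of_mem (Set.mem_insert _ _))

theorem genT_pow_conj_genA :
    genT d r s ^ r * genA d r s * (genT d r s ^ r)⁻¹ = genA d r s ^ s := by
  have h := PresentedGroup.one_of_mem (rels := stmt5Rels d r s) (Set.mem_insert_of_mem _ rfl)
  simp only [map_mul, map_pow, map_inv, map_zpow] at h
  exact mul_inv_eq_one.mp h

variable {d r s} {H : Type*} [Group H] (α τ : H)

noncomputable def toGroup (hα : α ^ d = 1) (hτ : τ ^ r * α * (τ ^ r)⁻¹ = α ^ s) :
    PresentedGroup (stmt5Rels d r s) →* H :=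
  PresentedGroup.toGroup (f := fun x => if x then α else τ) <| by
    simpa [stmt5Rels, stmt5Gen_a, stmt5Gen_t, mul_inv_eq_one] using ⟨hα, hτ⟩

variable {α τ}

theorem toGroup_genA (hα : α ^ d = 1) (hτ : τ ^ r * α * (τ ^ r)⁻¹ = α ^ s) :
    toGroup α τ hα hτ (genA d r s) = α :=
  PresentedGroup.toGroup.of _

theorem toGroup_genT (hα : α ^ d = 1) (hτ : τ ^ r * α * (τ ^ r)⁻¹ = α ^ s) :
    toGroup α τ hα hτ (genT d r s) = τ :=
  PresentedGroup.toGroup.of _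

end Presentation

section Decomposition

variable (d n : ℕ) {s : ℤ} (hs : Int.gcd s d = 1)

abbrev FreeProd : Type := CoprodI fun _ : Fin (n + 1) => Multiplicative (ZMod d)

noncomputable abbrev shift : MulAut (FreeProd d n) := CoprodI.twistedRotate n (zmodZPowAut hs)

abbrev SemidirectZ : Type := FreeProd d n ⋊[zpowersHom _ (shift d n hs)] Multiplicative ℤ

noncomputable def toSemidirect : PresentedGroup (stmt5Rels d (n + 1) s) →* SemidirectZ d n hs :=
  toGroup (inl (CoprodI.of (i := 0) (ofAdd 1))) (inr (ofAdd 1))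
    (by simp [← map_pow, ← ofAdd_nsmul])
    (by
      rw [← map_pow, ← map_inv, ← inl_aut, ← map_zpow, ← map_zpow, map_pow, zpowersHom_apply,
        toAdd_ofAdd, zpow_one, CoprodI.twistedRotate_pow_succ_of_zero, zmodZPowAut_ofAdd_one])

variable {d n} in
theorem toSemidirect_genA :
    toSemidirect d n hs (genA d (n + 1) s) =
      inl (CoprodI.of (i := (0 : Fin (n + 1))) (ofAdd (1 : ZMod d))) :=
  toGroup_genA _ _

variable {d n} in
theorem toSemidirect_genT : toSemidirect d n hs (genT d (n + 1) s) = inr (ofAdd 1) :=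
  toGroup_genT _ _

variable (s) in
noncomputable def ofFreeProd : FreeProd d n →* PresentedGroup (stmt5Rels d (n + 1) s) :=
  CoprodI.lift fun i => (MulAut.conj (genT d (n + 1) s ^ (i : ℕ))).toMonoidHom.comp
    (zmodPowersHom (genA d (n + 1) s) (genA_pow d (n + 1) s))

variable {d n} in
theorem ofFreeProd_of_ofAdd_one (i : Fin (n + 1)) :
    ofFreeProd d n s (CoprodI.of (i := i) (ofAdd 1)) =
      genT d (n + 1) s ^ (i : ℕ) * genA d (n + 1) s * (genT d (n + 1) s ^ (i : ℕ))⁻¹ := by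
  simp only [ofFreeProd, CoprodI.lift_of, MonoidHom.comp_apply, MulEquiv.coe_toMonoidHom,
    MulAut.conj_apply, zmodPowersHom_ofAdd_one]

theorem ofFreeProd_shift (k : FreeProd d n) :
    ofFreeProd d n s (shift d n hs k) =
      genT d (n + 1) s * ofFreeProd d n s k * (genT d (n + 1) s)⁻¹ := by
  suffices h : (ofFreeProd d n s).comp (shift d n hs).toMonoidHom =
      (MulAut.conj (genT d (n + 1) s)).toMonoidHom.comp (ofFreeProd d n s) from
    DFunLike.congr_fun h k
  refine CoprodI.ext_hom _ _ fun i => monoidHom_ext_zmod ?_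
  simp only [MonoidHom.comp_apply, MulEquiv.coe_toMonoidHom, MulAut.conj_apply]
  by_cases hi : i = Fin.last n
  · subst hi
    rw [CoprodI.twistedRotate_of_last, zmodZPowAut_ofAdd_one, map_zpow, map_zpow,
      ofFreeProd_of_ofAdd_one, ofFreeProd_of_ofAdd_one, Fin.val_zero, pow_zero, one_mul, inv_one,
      mul_one, Fin.val_last, ← genT_pow_conj_genA, pow_succ']
    group
  · rw [CoprodI.twistedRotate_of_ne_last n _ hi, ofFreeProd_of_ofAdd_one, ofFreeProd_of_ofAdd_one,
      coe_finRotate_of_ne_last hi, pow_succ']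
    group

noncomputable def fromSemidirect : SemidirectZ d n hs →* PresentedGroup (stmt5Rels d (n + 1) s) :=
  liftZPowers (ofFreeProd d n s) (shift d n hs) (genT d (n + 1) s) (ofFreeProd_shift d n hs)

theorem fromSemidirect_comp_toSemidirect :
    (fromSemidirect d n hs).comp (toSemidirect d n hs) = MonoidHom.id _ := by
  refine PresentedGroup.ext fun x => ?_
  cases x
  · change fromSemidirect d n hs (toSemidirect d n hs (genT d (n + 1) s)) = genT d (n + 1) s
    simp [toSemidirect_genT, fromSemidirect]
  · change fromSemidirect d n hs (toSemidirect d n hs (genA d (n + 1) s)) = genA d (n + 1) s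
    simp [toSemidirect_genA, fromSemidirect, ofFreeProd_of_ofAdd_one]

theorem toSemidirect_comp_fromSemidirect :
    (toSemidirect d n hs).comp (fromSemidirect d n hs) = MonoidHom.id _ := by
  refine hom_ext (CoprodI.ext_hom _ _ fun i => monoidHom_ext_zmod ?_) (MonoidHom.ext_mint ?_)
  · simp only [MonoidHom.comp_apply, MonoidHom.id_apply, fromSemidirect, liftZPowers_inl,
      ofFreeProd_of_ofAdd_one, map_mul, map_inv, map_pow, toSemidirect_genA, toSemidirect_genT]
    rw [← map_pow, ← map_inv, ← inl_aut, map_pow, zpowersHom_apply, toAdd_ofAdd, zpow_one,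
      CoprodI.twistedRotate_pow_of_zero n _ i.is_le]
  · simp [fromSemidirect, toSemidirect_genT]

noncomputable def mulEquivSemidirect :
    PresentedGroup (stmt5Rels d (n + 1) s) ≃* SemidirectZ d n hs :=
  MonoidHom.toMulEquiv _ _ (fromSemidirect_comp_toSemidirect d n hs)
    (toSemidirect_comp_fromSemidirect d n hs)

end Decomposition

end Stmt5

theorem stmt_5_general (d r : ℕ) (hr : 1 ≤ r) (s : ℤ) (hs : Int.gcd s d = 1)
    (ε : PresentedGroup (stmt5Rels d r s) →* Multiplicative ℤ)
    (hεa : ε (PresentedGroup.of stmt5Gen_a) = 1)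
    (hεt : ε (PresentedGroup.of stmt5Gen_t) = Multiplicative.ofAdd 1) :
    Nonempty (ε.ker ≃* Monoid.CoprodI (fun _ : Fin r => Multiplicative (ZMod d))) := by
  obtain ⟨n, rfl⟩ : ∃ n, r = n + 1 := ⟨r - 1, by omega⟩
  refine ⟨MonoidHom.kerMulEquivOfRightHom (Stmt5.mulEquivSemidirect d n hs) ε
    (PresentedGroup.ext fun x => ?_)⟩
  cases x
  · exact (congrArg SemidirectProduct.rightHom (Stmt5.toSemidirect_genT hs)).trans
      ((SemidirectProduct.rightHom_inr _).trans hεt.symm)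
  · exact (congrArg SemidirectProduct.rightHom (Stmt5.toSemidirect_genA hs)).trans
      ((SemidirectProduct.rightHom_inl _).trans hεa.symm)

/-- For `d, r ≥ 1` and `gcd(s, d) = 1`, let `π = ⟨a, t | a^d = 1, t^r a t^{-r} = a^s⟩`
and let `ε : π → ℤ` be the homomorphism with `ε(a) = 0` and `ε(t) = 1` (written multiplicatively,
with values in `Multiplicative ℤ`).  Then `ker ε` is isomorphic to the free product of `r` copies
of the cyclic group `ℤ/dℤ`. -/
theorem stmt_5 (d r : ℕ) (hd : 1 ≤ d) (hr : 1 ≤ r) (s : ℤ) (hs : Int.gcd s d = 1)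
    (ε : PresentedGroup (stmt5Rels d r s) →* Multiplicative ℤ)
    (hεa : ε (PresentedGroup.of stmt5Gen_a) = 1)
    (hεt : ε (PresentedGroup.of stmt5Gen_t) = Multiplicative.ofAdd 1) :
    Nonempty (ε.ker ≃* Monoid.CoprodI (fun _ : Fin r => Multiplicative (ZMod d))) :=
  stmt_5_general d r hr s hs ε hεa hεt
end

section
/- Let H be the Higman group ⟨a, b, c, d | b·a·b⁻¹ = a², c·b·c⁻¹ = b², d·c·d⁻¹ = c², a·d·a⁻¹ = d²⟩ and let B be the group ⟨x, y, z | x² = y³ = z⁷ = x·y·z⟩. For k, l ≥ 0, the group H^k × B^l × ℤ has weight 1; more precisely, the normal closure in H^k × B^l × ℤ of the single element whose H-coordinates all equal the image of the generator a, whose B-coordinates all equal the image of the generator x, and whose ℤ-coordinate is 1, is the whole group. -/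
/-!
Both `H` and `B` are perfect and normally generated by `a`, resp. `x`. If a perfect group `G` is
normally generated by `a`, then any normal subgroup `N` containing every commutator `⁅g, a⁆` is
all of `G`: modulo `N` the normal generator `a` is central, so `G ⧸ N` is abelian and
`G = [G, G] ≤ N`. This property passes to finite direct products. Now a normal subgroup of
`G × Q` containing `(a, q)` contains `⁅(g, 1), (a, q)⁆ = (⁅g, a⁆, 1)` for all `g`, hence `G × 1`,
hence `(1, q)`; so it is everything as soon as `q` normally generates `Q`. Apply this twice, with
`Q = B^l × ℤ` and with `Q = ℤ`.
-/

/-- The relators of the Higman group `⟨a,b,c,d | bab⁻¹=a², cbc⁻¹=b², dcd⁻¹=c², ada⁻¹=d²⟩`,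
with the four generators `a, b, c, d` encoded as `0, 1, 2, 3 : Fin 4`. -/
def higmanRels : Set (FreeGroup (Fin 4)) :=
  {FreeGroup.of 1 * FreeGroup.of 0 * (FreeGroup.of 1)⁻¹ * (FreeGroup.of 0 ^ 2)⁻¹,
   FreeGroup.of 2 * FreeGroup.of 1 * (FreeGroup.of 2)⁻¹ * (FreeGroup.of 1 ^ 2)⁻¹,
   FreeGroup.of 3 * FreeGroup.of 2 * (FreeGroup.of 3)⁻¹ * (FreeGroup.of 2 ^ 2)⁻¹,
   FreeGroup.of 0 * FreeGroup.of 3 * (FreeGroup.of 0)⁻¹ * (FreeGroup.of 3 ^ 2)⁻¹}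

/-- The relators of the group `B = ⟨x, y, z | x² = y³ = z⁷ = xyz⟩`, with the three generators
`x, y, z` encoded as `0, 1, 2 : Fin 3`. -/
def brieskornRels : Set (FreeGroup (Fin 3)) :=
  {FreeGroup.of 0 ^ 2 * (FreeGroup.of 1 ^ 3)⁻¹,
   FreeGroup.of 1 ^ 3 * (FreeGroup.of 2 ^ 7)⁻¹,
   FreeGroup.of 2 ^ 7 * (FreeGroup.of 0 * FreeGroup.of 1 * FreeGroup.of 2)⁻¹}

open Subgroup
open scoped commutatorElement

theorem normalClosure_eq_top_of_forall_map_eq_one {G : Type u} [Group G] {a : G}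
    (h : ∀ (Q : Type u) [Group Q] (f : G →* Q), f a = 1 → f = 1) : normalClosure {a} = ⊤ := by
  have hmk := h _ (QuotientGroup.mk' (normalClosure {a}))
    ((QuotientGroup.eq_one_iff a).2 (subset_normalClosure rfl))
  rw [← QuotientGroup.ker_mk' (normalClosure {a}), hmk, MonoidHom.ker_one]

section Group

variable {G : Type*} [Group G]

theorem commutator_eq_top_of_normalClosure_eq_top {a : G} (ha : normalClosure {a} = ⊤)
    (hmem : a ∈ commutator G) : commutator G = ⊤ :=
  eq_top_iff.2 <| ha ▸ normalClosure_le_normal (Set.singleton_subset_iff.2 hmem)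

theorem normalClosure_range_commutatorElement_eq_top {a : G} (hperf : commutator G = ⊤)
    (ha : normalClosure {a} = ⊤) : normalClosure (Set.range fun g : G => ⁅g, a⁆) = ⊤ := by
  set N := normalClosure (Set.range fun g : G => ⁅g, a⁆)
  have hcentral : normalClosure {a} ≤ (center (G ⧸ N)).comap (QuotientGroup.mk' N) := by
    refine normalClosure_le_normal (Set.singleton_subset_iff.2 (mem_center_iff.2 fun q => ?_))
    obtain ⟨g, rfl⟩ := QuotientGroup.mk'_surjective N q
    rw [← commutatorElement_eq_one_iff_mul_comm, ← map_commutatorElement,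
      QuotientGroup.mk'_apply, QuotientGroup.eq_one_iff]
    exact subset_normalClosure ⟨g, rfl⟩
  rw [ha] at hcentral
  rw [eq_top_iff, ← hperf, commutator_def, commutator_le]
  intro p _ q _
  rw [← QuotientGroup.eq_one_iff, ← QuotientGroup.mk'_apply, map_commutatorElement,
    commutatorElement_eq_one_iff_mul_comm]
  exact mem_center_iff.1 (hcentral (mem_top q)) _

end Group

theorem Subgroup.Normal.commutatorElement_mem {G : Type*} [Group G] {N : Subgroup G}
    (hN : N.Normal) (g : G) {n : G} (hn : n ∈ N) : ⁅g, n⁆ ∈ N :=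
  commutatorElement_def g n ▸ mul_mem (hN.conj_mem n hn g) (inv_mem hn)

theorem Pi.mulSingle_commutatorElement {ι : Type*} [DecidableEq ι] {G : ι → Type*}
    [∀ i, Group (G i)] (i : ι) (g : G i) (a : ∀ i, G i) :
    Pi.mulSingle i ⁅g, a i⁆ = ⁅Pi.mulSingle i g, a⁆ := by
  funext j
  by_cases hj : j = i
  · subst hj
    simp [commutatorElement_def]
  · simp [commutatorElement_def, hj]

theorem normalClosure_range_commutatorElement_pi_eq_top {ι : Type*} [Finite ι]
    {G : ι → Type*} [∀ i, Group (G i)] {a : ∀ i, G i}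
    (h : ∀ i, normalClosure (Set.range fun g : G i => ⁅g, a i⁆) = ⊤) :
    normalClosure (Set.range fun g : (∀ i, G i) => ⁅g, a⁆) = ⊤ := by
  classical
  set N := normalClosure (Set.range fun g : (∀ i, G i) => ⁅g, a⁆)
  have hsingle (i : ι) : N.comap (MonoidHom.mulSingle G i) = ⊤ := by
    refine eq_top_iff.2 (h i ▸ normalClosure_le_normal ?_)
    rintro _ ⟨g, rfl⟩
    exact subset_normalClosure ⟨Pi.mulSingle i g, (Pi.mulSingle_commutatorElement i g a).symm⟩
  exact eq_top_iff.2 fun x _ =>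
    pi_mem_of_mulSingle_mem x fun i => (hsingle i).ge (mem_top (x i))

theorem normalClosure_prod_eq_top {G Q : Type*} [Group G] [Group Q] {a : G} {q : Q}
    (ha : normalClosure (Set.range fun g : G => ⁅g, a⁆) = ⊤) (hq : normalClosure {q} = ⊤) :
    normalClosure {(a, q)} = ⊤ := by
  set N := normalClosure {(a, q)}
  have hmem : (a, q) ∈ N := subset_normalClosure rfl
  have hG : N.comap (MonoidHom.inl G Q) = ⊤ := by
    refine eq_top_iff.2 (ha ▸ normalClosure_le_normal ?_)
    rintro _ ⟨g, rfl⟩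
    have hcomm : (⁅g, a⁆, (1 : Q)) = ⁅((g, 1) : G × Q), (a, q)⁆ := by simp [commutatorElement_def]
    change (⁅g, a⁆, (1 : Q)) ∈ N
    exact hcomm ▸ normalClosure_normal.commutatorElement_mem _ hmem
  have hq_mem : ((1 : G), q) ∈ N := by
    have : ((1 : G), q) = (a, 1)⁻¹ * (a, q) := by simp
    exact this ▸ mul_mem (inv_mem (hG.ge (mem_top a))) hmem
  have hQ : N.comap (MonoidHom.inr G Q) = ⊤ :=
    eq_top_iff.2 (hq ▸ normalClosure_le_normal (Set.singleton_subset_iff.2 hq_mem))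
  refine eq_top_iff.2 fun x _ => ?_
  have : x = (x.1, 1) * (1, x.2) := by simp
  exact this ▸ mul_mem (hG.ge (mem_top x.1)) (hQ.ge (mem_top x.2))

theorem commutatorElement_eq_self_of_conj_eq_sq {G : Type*} [Group G] {a b : G}
    (h : b * a * b⁻¹ = a ^ 2) : ⁅b, a⁆ = a := by
  rw [commutatorElement_def, h, pow_two, mul_inv_cancel_right]

-- In `Fin 4` we have `3 + 1 = 0`, so this also covers the relation `ada⁻¹ = d²`.
theorem higman_conj_of_succ (i : Fin 4) :
    (PresentedGroup.of (i + 1) : PresentedGroup higmanRels) * .of i * (.of (i + 1))⁻¹ =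
      .of i ^ 2 := by
  fin_cases i <;> exact PresentedGroup.mk_eq_mk_of_mul_inv_mem (by simp [higmanRels])

theorem higman_map_eq_one {Q : Type*} [Group Q] (f : PresentedGroup higmanRels →* Q)
    (ha : f (.of 0) = 1) : f = 1 := by
  have step (i : Fin 4) (h : f (.of (i + 1)) = 1) : f (.of i) = 1 := by
    have := congrArg f (higman_conj_of_succ i)
    rwa [map_mul, map_mul, map_inv, h, map_pow, one_mul, inv_one, mul_one, pow_two,
      left_eq_mul] at this
  have hd := step 3 ha
  have hc := step 2 hd
  have hb := step 1 hc
  exact PresentedGroup.ext fun j => by fin_cases j <;> assumption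

theorem higman_normalClosure_of_zero :
    normalClosure {(PresentedGroup.of 0 : PresentedGroup higmanRels)} = ⊤ :=
  normalClosure_eq_top_of_forall_map_eq_one fun _ _ f => higman_map_eq_one f

theorem higman_commutator_eq_top : commutator (PresentedGroup higmanRels) = ⊤ :=
  commutator_eq_top_of_normalClosure_eq_top higman_normalClosure_of_zero <|
    commutatorElement_eq_self_of_conj_eq_sq (higman_conj_of_succ 0) ▸
      commutator_mem_commutator (mem_top _) (mem_top _)

section BrieskornRelations

variable {G : Type*} {x y z : G}

theorem eq_one_of_brieskorn_relations_of_eq_one [Group G] (h₁ : x ^ 2 = y ^ 3)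
    (h₂ : y ^ 3 = z ^ 7) (h₃ : z ^ 7 = x * y * z) (hx : x = 1) : y = 1 ∧ z = 1 := by
  subst hx
  have hy3 : y ^ 3 = 1 := by rw [← h₁, one_pow]
  have hz7 : z ^ 7 = 1 := h₂ ▸ hy3
  have hy : y = z⁻¹ := eq_inv_of_mul_eq_one_left (by rw [← one_mul y, ← h₃, hz7])
  have hz3 : z ^ 3 = 1 := by rwa [hy, inv_pow, inv_eq_one] at hy3
  have hz : z = 1 := by
    calc z = z ^ 7 * (z ^ 3 * z ^ 3)⁻¹ := by group
      _ = 1 := by rw [hz7, hz3]; simp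
  exact ⟨by rw [hy, hz, inv_one], hz⟩

theorem eq_one_of_brieskorn_relations [CommGroup G] (h₁ : x ^ 2 = y ^ 3)
    (h₂ : y ^ 3 = z ^ 7) (h₃ : z ^ 7 = x * y * z) : x = 1 := by
  have hx : x = y * z := mul_left_cancel (a := x) (by rw [← mul_assoc, ← pow_two, h₁, h₂, h₃])
  have hy : y = z ^ 2 := mul_left_cancel (a := y ^ 2) (by rw [← pow_succ, ← h₁, hx, mul_pow])
  have hz : z = 1 :=
    mul_left_cancel (a := z ^ 6) (by rw [← pow_succ, mul_one, ← h₂, hy, ← pow_mul])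
  rw [hx, hy, hz, one_pow, one_mul]

end BrieskornRelations

section Brieskorn

variable {Q : Type*} [Group Q] (f : PresentedGroup brieskornRels →* Q)

theorem brieskorn_map_relations :
    f (.of 0) ^ 2 = f (.of 1) ^ 3 ∧ f (.of 1) ^ 3 = f (.of 2) ^ 7 ∧
      f (.of 2) ^ 7 = f (.of 0) * f (.of 1) * f (.of 2) := by
  simp only [← map_pow, ← map_mul]
  refine ⟨?_, ?_, ?_⟩ <;>
    exact congrArg f (PresentedGroup.mk_eq_mk_of_mul_inv_mem (by simp [brieskornRels]))

theorem brieskorn_map_eq_one (hx : f (.of 0) = 1) : f = 1 := by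
  obtain ⟨h₁, h₂, h₃⟩ := brieskorn_map_relations f
  obtain ⟨hy, hz⟩ := eq_one_of_brieskorn_relations_of_eq_one h₁ h₂ h₃ hx
  exact PresentedGroup.ext fun j => by fin_cases j <;> assumption

end Brieskorn

theorem brieskorn_normalClosure_of_zero :
    normalClosure {(PresentedGroup.of 0 : PresentedGroup brieskornRels)} = ⊤ :=
  normalClosure_eq_top_of_forall_map_eq_one fun _ _ f => brieskorn_map_eq_one f

theorem brieskorn_commutator_eq_top : commutator (PresentedGroup brieskornRels) = ⊤ := by
  refine commutator_eq_top_of_normalClosure_eq_top brieskorn_normalClosure_of_zero ?_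
  obtain ⟨h₁, h₂, h₃⟩ := brieskorn_map_relations Abelianization.of
  rw [← Abelianization.ker_of, MonoidHom.mem_ker]
  exact eq_one_of_brieskorn_relations h₁ h₂ h₃

theorem Int.normalClosure_ofAdd_one :
    normalClosure {Multiplicative.ofAdd (1 : ℤ)} = ⊤ :=
  eq_top_iff.2 fun t _ => by
    have ht : Multiplicative.ofAdd (1 : ℤ) ^ t.toAdd = t := by
      rw [← ofAdd_zsmul, smul_eq_mul, mul_one, ofAdd_toAdd]
    exact ht ▸ zpow_mem (subset_normalClosure (Set.mem_singleton _)) _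

/-- For `k, l ≥ 0`, the group `H^k × B^l × ℤ` (with `H` the Higman group and `B`
the Brieskorn `Σ(2,3,7)` group) is the normal closure of the single element whose `H`-coordinates
all equal (the image of) `a`, whose `B`-coordinates all equal (the image of) `x`, and whose
`ℤ`-coordinate is `1`; in particular it has weight `1`. -/
theorem stmt_8 (k l : ℕ) :
    Subgroup.normalClosure
      ({((fun _ => PresentedGroup.of (0 : Fin 4)),
         (fun _ => PresentedGroup.of (0 : Fin 3)),
         Multiplicative.ofAdd (1 : ℤ))} :
        Set ((Fin k → PresentedGroup higmanRels) × (Fin l → PresentedGroup brieskornRels) ×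
          Multiplicative ℤ)) = ⊤ := by
  have hH := normalClosure_range_commutatorElement_eq_top higman_commutator_eq_top
    higman_normalClosure_of_zero
  have hB := normalClosure_range_commutatorElement_eq_top brieskorn_commutator_eq_top
    brieskorn_normalClosure_of_zero
  exact normalClosure_prod_eq_top (normalClosure_range_commutatorElement_pi_eq_top fun _ => hH)
    (normalClosure_prod_eq_top (normalClosure_range_commutatorElement_pi_eq_top fun _ => hB)
      Int.normalClosure_ofAdd_one)
end

section
/- Let G be a group whose abelianization G/[G,G] is isomorphic to ℤ, and let N be a normal subgroup of G such that the abelianization of the quotient group G/N is finite. Then the quotient group N/(N ∩ [G,G]) is infinite cyclic, i.e. isomorphic to ℤ. -/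
/-- If the abelianization of `G` is infinite cyclic and `N` is a normal subgroup
of `G` such that the abelianization of `G/N` is finite, then `N/(N ∩ [G,G])` is infinite
cyclic. -/
theorem stmt_15 {G : Type*} [Group G]
    (hab : Nonempty (Abelianization G ≃* Multiplicative ℤ))
    (N : Subgroup G) [N.Normal]
    (hfin : Finite (Abelianization (G ⧸ N))) :
    Nonempty ((N ⧸ (commutator G).subgroupOf N) ≃* Multiplicative ℤ) := by
  obtain ⟨e⟩ := hab
  have hker_of : (Abelianization.of (G := G)).ker = commutator G := by
    ext x
    exact QuotientGroup.eq_one_iff x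
  set f : N →* Multiplicative ℤ :=
    e.toMonoidHom.comp (Abelianization.of.comp N.subtype) with hf
  have hker : f.ker = (commutator G).subgroupOf N := by
    ext x
    simp only [hf, MonoidHom.mem_ker, MonoidHom.comp_apply, MulEquiv.coe_toMonoidHom,
      EmbeddingLike.map_eq_one_iff, Subgroup.mem_subgroupOf]
    rw [← hker_of]
    rfl
  -- the isomorphism N / (commutator G).subgroupOf N ≃* f.range
  have e1 : (N ⧸ (commutator G).subgroupOf N) ≃* f.range :=
    (QuotientGroup.quotientMulEquivOfEq hker.symm).trans
      (QuotientGroup.quotientKerEquivRange f)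
  -- define φ : Multiplicative ℤ →* Abelianization (G ⧸ N)
  set φ : Multiplicative ℤ →* Abelianization (G ⧸ N) :=
    (Abelianization.map (QuotientGroup.mk' N)).comp e.symm.toMonoidHom with hφ
  have hcm : commutator (G ⧸ N) = Subgroup.map (QuotientGroup.mk' N) (commutator G) := by
    rw [commutator_def, commutator_def, Subgroup.map_commutator,
      Subgroup.map_top_of_surjective _ (QuotientGroup.mk'_surjective N)]
  have hrange : f.range = φ.ker := by
    ext x
    constructor
    · rintro ⟨n, rfl⟩
      simp only [hφ, hf, MonoidHom.mem_ker, MonoidHom.comp_apply, MulEquiv.coe_toMonoidHom,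
        MulEquiv.symm_apply_apply, Abelianization.map_of]
      have : (QuotientGroup.mk' N) (N.subtype n) = 1 := (QuotientGroup.eq_one_iff _).mpr n.2
      rw [this, map_one]
    · intro hx
      obtain ⟨g, hg⟩ : ∃ g : G, Abelianization.of g = e.symm x :=
        Quotient.exists_rep (e.symm x)
      have hφx : Abelianization.of ((QuotientGroup.mk' N) g) = 1 := by
        have := hx
        simp only [hφ, MonoidHom.mem_ker, MonoidHom.comp_apply, MulEquiv.coe_toMonoidHom] at this
        rwa [← hg, Abelianization.map_of] at this
      have hmem : (QuotientGroup.mk' N) g ∈ commutator (G ⧸ N) :=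
        (QuotientGroup.eq_one_iff _).mp hφx
      rw [hcm] at hmem
      obtain ⟨c, hc, hcg⟩ := hmem
      have hn : g * c⁻¹ ∈ N := by
        have : (QuotientGroup.mk' N) (g * c⁻¹) = 1 := by
          rw [map_mul, map_inv, hcg, mul_inv_cancel]
        exact (QuotientGroup.eq_one_iff _).mp this
      refine ⟨⟨g * c⁻¹, hn⟩, ?_⟩
      have hc1 : Abelianization.of c = 1 := (QuotientGroup.eq_one_iff _).mpr hc
      simp only [hf, MonoidHom.comp_apply, MulEquiv.coe_toMonoidHom, Subgroup.coe_subtype]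
      rw [map_mul, map_inv, hc1, inv_one, mul_one, hg, MulEquiv.apply_symm_apply]
  -- φ.ker has finite index since the codomain is finite
  have hFI : f.range.FiniteIndex := by
    rw [hrange]
    exact Subgroup.finiteIndex_ker φ
  -- hence f.range is infinite
  have hinf : Infinite f.range := by
    have hcard : Nat.card f.range * f.range.index = Nat.card (Multiplicative ℤ) :=
      Subgroup.card_mul_index f.range
    have hz : Nat.card (Multiplicative ℤ) = 0 := Nat.card_eq_zero_of_infinite
    have : Nat.card f.range = 0 := by
      rcases Nat.mul_eq_zero.mp (hcard.trans hz) with h | h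
      · exact h
      · exact absurd h hFI.index_ne_zero
    rcases Nat.card_eq_zero.mp this with h | h
    · exact (h.false (⟨1, f.range.one_mem⟩ : f.range)).elim
    · exact h
  -- f.range is cyclic (subgroup of ℤ) and infinite, so ≃* Multiplicative ℤ
  have e2 : f.range ≃* Multiplicative ℤ :=
    mulEquivOfCyclicCardEq (by
      rw [Nat.card_eq_zero_of_infinite, Nat.card_eq_zero_of_infinite])
  exact ⟨e1.trans e2⟩
end
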